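/- arXiv:1411.3810 — 9 statements merged into one kernel-verified Lean document; each statement's English description precedes it below -/
import Mathlib

section
/- Let m, n ≥ 2 be integers, and let u ∈ ℝ^{m−1} and v ∈ ℝ^{n−1} be arbitrary vectors. Define the matrix Q ∈ ℝ^{m×n} by Q(k,l) = u(k)·v(l−1) − u(k−1)·v(l) for 1 ≤ k ≤ m, 1 ≤ l ≤ n, with the conventions u(0) = u(m) = 0 and v(0) = v(n) = 0. Then rank(Q) ≤ 2 and S_{(m,n)}(Q) = 0; i.e., Q lies in the rank-two null space N(S_{(m,n)}, 2). In particular, N0(m,n) ⊆ N(S_{(m,n)}, 2). -/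
open scoped BigOperators
open MeasureTheory

noncomputable section

/-- 1-based access into a vector `u ∈ ℝ^d`, with the convention that
out-of-range indices (including `0` and anything `> d`) give `0`. -/
def pad1 {d : ℕ} (u : Fin d → ℝ) (i : ℕ) : ℝ :=
  if h : 1 ≤ i ∧ i ≤ d then u ⟨i - 1, by omega⟩ else 0

/-- The lifted linear convolution map `S_{(m,n)} : ℝ^{m×n} → ℝ^{m+n-1}`,
summing the entries of a matrix along its anti-diagonals. -/
def liftS (m n : ℕ) (W : Matrix (Fin m) (Fin n) ℝ) : Fin (m + n - 1) → ℝ :=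
  fun l => ∑ k : Fin m, ∑ j : Fin n, if (k : ℕ) + (j : ℕ) = (l : ℕ) then W k j else 0

/-- Linear convolution `x ⋆ y ∈ ℝ^{m+n-1}` of `x ∈ ℝ^m` and `y ∈ ℝ^n`. -/
def conv {m n : ℕ} (x : Fin m → ℝ) (y : Fin n → ℝ) : Fin (m + n - 1) → ℝ :=
  fun l => ∑ k : Fin m, ∑ j : Fin n, if (k : ℕ) + (j : ℕ) = (l : ℕ) then x k * y j else 0

/-- The rank-two null space `N(S_{(m,n)}, 2)`. -/
def rankTwoNull (m n : ℕ) : Set (Matrix (Fin m) (Fin n) ℝ) :=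
  {Q | Q.rank ≤ 2 ∧ liftS m n Q = 0}

/-- The parametrized family `N0(m,n)`:
`Q(k,l) = u(k)·v(l−1) − u(k−1)·v(l)` (1-based, with zero-padding conventions). -/
def N0set (m n : ℕ) : Set (Matrix (Fin m) (Fin n) ℝ) :=
  {Q | ∃ (u : Fin (m - 1) → ℝ) (v : Fin (n - 1) → ℝ),
    ∀ (k : Fin m) (l : Fin n),
      Q k l = pad1 u ((k : ℕ) + 1) * pad1 v (l : ℕ) - pad1 u (k : ℕ) * pad1 v ((l : ℕ) + 1)}

/-- The recursively defined family `N2(m,n)`: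
`Q(k,l) = u₁(k)·v₁(l−1) + u₂(k−1)·v₂(l)` (1-based, with zero-padding conventions),
where `u₁v₁ᵀ + u₂v₂ᵀ ∈ N(S_{(m-1,n-1)}, 2) \ {0}`. -/
def N2set (m n : ℕ) : Set (Matrix (Fin m) (Fin n) ℝ) :=
  {Q | ∃ (u₁ u₂ : Fin (m - 1) → ℝ) (v₁ v₂ : Fin (n - 1) → ℝ),
    (Matrix.of fun i j => u₁ i * v₁ j + u₂ i * v₂ j) ∈ rankTwoNull (m - 1) (n - 1) ∧
    (Matrix.of fun i j => u₁ i * v₁ j + u₂ i * v₂ j) ≠ (0 : Matrix (Fin (m - 1)) (Fin (n - 1)) ℝ) ∧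
    ∀ (k : Fin m) (l : Fin n),
      Q k l = pad1 u₁ ((k : ℕ) + 1) * pad1 v₁ (l : ℕ) + pad1 u₂ (k : ℕ) * pad1 v₂ ((l : ℕ) + 1)}

/-- The exceptional set `M(m,n) = {Q ∈ N(S_{(m,n)}, 2) : Q(m,1) = 0 and Q(1,n) = 0}` (1-based). -/
def Mexc (m n : ℕ) (hm : 0 < m) (hn : 0 < n) : Set (Matrix (Fin m) (Fin n) ℝ) :=
  {Q | Q ∈ rankTwoNull m n ∧ Q ⟨m - 1, by omega⟩ ⟨0, hn⟩ = 0 ∧ Q ⟨0, hm⟩ ⟨n - 1, by omega⟩ = 0}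

/-- Identifiability of the pair `p = (x,y)` with respect to linear convolution
and the constraint set `K`. -/
def Identifiable {m n : ℕ} (K : Set ((Fin m → ℝ) × (Fin n → ℝ)))
    (p : (Fin m → ℝ) × (Fin n → ℝ)) : Prop :=
  ∀ q ∈ K, conv q.1 q.2 = conv p.1 p.2 →
    ∃ α : ℝ, α ≠ 0 ∧ q.1 = α • p.1 ∧ q.2 = (1 / α) • p.2

/-- The quotient set `Q∼(w,d)`: pairs `(w*, γ) ∈ ℝ^{d-1} × [0, 2π)` with
`w(j) = w*(j)·cos γ − w*(j−1)·sin γ` for `1 ≤ j ≤ d` (1-based, zero-padding conventions). -/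
def quotSet (d : ℕ) (w : Fin d → ℝ) : Set ((Fin (d - 1) → ℝ) × ℝ) :=
  {p | p.2 ∈ Set.Ico 0 (2 * Real.pi) ∧
    ∀ j : Fin d, w j = pad1 p.1 ((j : ℕ) + 1) * Real.cos p.2 - pad1 p.1 (j : ℕ) * Real.sin p.2}

/-- Matrices over `ℝ` carry the (product) metric space structure of `ℝ^{m×n}`. -/
instance {m n : ℕ} : MetricSpace (Matrix (Fin m) (Fin n) ℝ) :=
  show MetricSpace (Fin m → Fin n → ℝ) from inferInstance

/-!
Write `U = pad1 u`, `V = pad1 v`, zero outside `1, …, m - 1` and `1, …, n - 1`. Then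
`Q(k,l) = U(k+1) V(l) - U(k) V(l+1)` is a difference of two outer products, hence of rank at most
two. Its anti-diagonal sums are coefficients of `u(x) · x v(x) - x u(x) · v(x) = 0`: both products
have `l`-th coefficient `∑_{a+b=l+1} U(a) V(b)`, because `U(0) = V(0) = 0`.
-/

open Finset

lemma pad1_zero {d : ℕ} (u : Fin d → ℝ) : pad1 u 0 = 0 := by
  simp [pad1]

lemma pad1_eq_zero_of_le {m : ℕ} (u : Fin (m - 1) → ℝ) {i : ℕ} (h : m ≤ i) : pad1 u i = 0 := by
  rw [pad1, dif_neg]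
  omega

theorem Matrix.rank_of_mul_sub_mul_le_two {ι κ R : Type*} [Fintype κ] [CommRing R]
    [StrongRankCondition R] (a c : ι → R) (b d : κ → R) :
    (Matrix.of fun i j => a i * b j - c i * d j).rank ≤ 2 := by
  have hfactor : (Matrix.of fun i j => a i * b j - c i * d j) =
      Matrix.of (fun i (k : Fin 2) => ![a i, -c i] k) * Matrix.of ![b, d] := by
    ext i j
    simp [Matrix.mul_apply, Fin.sum_univ_two, sub_eq_add_neg]
  rw [hfactor]
  exact (Matrix.rank_mul_le_left _ _).trans
    ((Matrix.rank_le_card_width _).trans_eq (Fintype.card_fin 2))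

theorem liftS_of_eq_sum_antidiagonal {m n : ℕ} (f : ℕ → ℕ → ℝ)
    (hf : ∀ a b, f a b ≠ 0 → a < m ∧ b < n) (l : Fin (m + n - 1)) :
    liftS m n (Matrix.of fun k j => f k j) l = ∑ p ∈ antidiagonal (l : ℕ), f p.1 p.2 := by
  rw [liftS, ← Fintype.sum_prod_type']
  have hdiag (x : Fin m × Fin n) (hx : (if (x.1 : ℕ) + x.2 = l then f x.1 x.2 else 0) ≠ 0) :
      (x.1 : ℕ) + x.2 = l ∧ f x.1 x.2 ≠ 0 := by
    by_cases h : (x.1 : ℕ) + x.2 = (l : ℕ) <;> simp_all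
  refine sum_bij_ne_zero (fun x _ _ => ((x.1 : ℕ), (x.2 : ℕ))) ?_ ?_ ?_ ?_
  · intro x _ hx
    simpa using (hdiag x hx).1
  · intro x _ _ y _ _ hxy
    simp only [Prod.mk.injEq] at hxy
    exact Prod.ext (Fin.ext hxy.1) (Fin.ext hxy.2)
  · intro p hp hfp
    obtain ⟨ha, hb⟩ := hf p.1 p.2 hfp
    refine ⟨(⟨p.1, ha⟩, ⟨p.2, hb⟩), mem_univ _, ?_, rfl⟩
    simpa [(mem_antidiagonal.mp hp)] using hfp
  · intro x _ hx
    simp [(hdiag x hx).1]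

theorem sum_antidiagonal_succ_mul_eq {R : Type*} [CommSemiring R] (U V : ℕ → R)
    (hU : U 0 = 0) (hV : V 0 = 0) (l : ℕ) :
    ∑ p ∈ antidiagonal l, U (p.1 + 1) * V p.2 = ∑ p ∈ antidiagonal l, U p.1 * V (p.2 + 1) := by
  have h := (Nat.sum_antidiagonal_succ (f := fun p => U p.1 * V p.2) (n := l)).symm.trans
    (Nat.sum_antidiagonal_succ' (f := fun p => U p.1 * V p.2))
  simpa [hU, hV] using h

theorem liftS_shift_sub_eq_zero {m n : ℕ} (U V : ℕ → ℝ) (hU₀ : U 0 = 0) (hV₀ : V 0 = 0)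
    (hU : ∀ i, m ≤ i → U i = 0) (hV : ∀ j, n ≤ j → V j = 0) :
    liftS m n (Matrix.of fun (k : Fin m) (l : Fin n) =>
      U ((k : ℕ) + 1) * V l - U k * V ((l : ℕ) + 1)) = 0 := by
  have hsupp (a b : ℕ) (h : U (a + 1) * V b - U a * V (b + 1) ≠ 0) : a < m ∧ b < n := by
    by_contra! hab
    refine h ?_
    by_cases ha : m ≤ a
    · simp [hU a ha, hU (a + 1) (by omega)]
    · have hb : n ≤ b := hab (by omega)
      simp [hV b hb, hV (b + 1) (by omega)]
  funext l
  rw [liftS_of_eq_sum_antidiagonal (fun a b => U (a + 1) * V b - U a * V (b + 1)) hsupp,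
    sum_sub_distrib, sum_antidiagonal_succ_mul_eq U V hU₀ hV₀, sub_self, Pi.zero_apply]

theorem pad1_shift_sub_mem_rankTwoNull {m n : ℕ} (u : Fin (m - 1) → ℝ) (v : Fin (n - 1) → ℝ) :
    (Matrix.of fun (k : Fin m) (l : Fin n) =>
        pad1 u ((k : ℕ) + 1) * pad1 v (l : ℕ) - pad1 u (k : ℕ) * pad1 v ((l : ℕ) + 1))
      ∈ rankTwoNull m n :=
  ⟨Matrix.rank_of_mul_sub_mul_le_two _ _ _ _,
    liftS_shift_sub_eq_zero _ _ (pad1_zero u) (pad1_zero v)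
      (fun _ => pad1_eq_zero_of_le u) (fun _ => pad1_eq_zero_of_le v)⟩

theorem stmt0_general (m n : ℕ)
    (u : Fin (m - 1) → ℝ) (v : Fin (n - 1) → ℝ) :
    (Matrix.of fun (k : Fin m) (l : Fin n) =>
        pad1 u ((k : ℕ) + 1) * pad1 v (l : ℕ) - pad1 u (k : ℕ) * pad1 v ((l : ℕ) + 1))
      ∈ rankTwoNull m n ∧
    N0set m n ⊆ rankTwoNull m n := by
  refine ⟨pad1_shift_sub_mem_rankTwoNull u v, ?_⟩
  rintro Q ⟨u', v', hQ⟩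
  rw [show Q = _ from Matrix.ext hQ]
  exact pad1_shift_sub_mem_rankTwoNull u' v'

/-- the matrix `Q(k,l) = u(k)·v(l−1) − u(k−1)·v(l)` has rank at most 2 and
lies in the null space of `S_{(m,n)}`; in particular `N0(m,n) ⊆ N(S_{(m,n)}, 2)`. -/
theorem stmt0 (m n : ℕ) (hm : 2 ≤ m) (hn : 2 ≤ n)
    (u : Fin (m - 1) → ℝ) (v : Fin (n - 1) → ℝ) :
    (Matrix.of fun (k : Fin m) (l : Fin n) =>
        pad1 u ((k : ℕ) + 1) * pad1 v (l : ℕ) - pad1 u (k : ℕ) * pad1 v ((l : ℕ) + 1))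
      ∈ rankTwoNull m n ∧
    N0set m n ⊆ rankTwoNull m n :=
  stmt0_general m n u v
end
end

section
/- For all integers m, n ≥ 3, there exists a set M ⊆ N(S_{(m,n)}, 2) ⊆ ℝ^{m×n} of Hausdorff dimension m + n − 3 such that no element of M belongs to N0(m,n) (i.e., no element of M is representable in the form Q(k,l) = u(k)·v(l−1) − u(k−1)·v(l) for any u ∈ ℝ^{m−1}, v ∈ ℝ^{n−1}). -/
/-!
Let `A(x) = x + a₀x² + a₁x³ + ⋯`, `B(y) = b₀y + b₁y² + ⋯` and `K(x, y) = 1 + β(x + y) + αxy`, and let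
`R(p, q)` be the coefficient array of `A(x) B(y) K(x, y)`. The matrix `Q(k, l) = R(k, l+1) - R(k+1, l)`
(the coefficient array of `A(x) B(y) K(x, y) (1/y - 1/x)`) has vanishing anti-diagonal sums, since
they telescope, and rank at most two, since `K(x, y) (1/y - 1/x) = c₁(x) c₂(y) - c₂(x) c₁(y)` with
`c₁ = 1 + βz`, `c₂ = 1/z - αz`.
Every element of `N0` is such a telescope of a rank-one array `R = -u ⊗ v`, so the minor
`R(1,1) R(2,2) - R(1,2) R(2,1)`, which is a quadratic polynomial in the entries of `Q`, vanishes on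
`N0`; it equals `1` at `A = x`, `B = y`, `K = 1 + xy`. The `m + n - 3` parameters `(a, b, α, β)`
enter smoothly, and at that base point the derivative has an explicit linear left inverse, so by
the inverse function theorem the image of any neighbourhood has Hausdorff dimension `m + n - 3`.
-/

open scoped BigOperators
open MeasureTheory

noncomputable section

open Set Filter Topology Module

namespace LiftedConvolution

section Padding

variable {d : ℕ}

lemma pad1_eq_zero (u : Fin d → ℝ) {i : ℕ} (h : i = 0 ∨ d < i) : pad1 u i = 0 := by
  unfold pad1
  rw [dif_neg (by omega)]

lemma pad1_of_le (u : Fin d → ℝ) {i : ℕ} (h₁ : 1 ≤ i) (h₂ : i ≤ d) :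
    pad1 u i = u ⟨i - 1, by omega⟩ := by
  unfold pad1
  rw [dif_pos ⟨h₁, h₂⟩]

lemma pad1_succ (u : Fin d → ℝ) (i : Fin d) : pad1 u (i + 1) = u i :=
  pad1_of_le u (by omega) i.2

def padCLM (i : ℕ) : (Fin d → ℝ) →L[ℝ] ℝ :=
  if h : 1 ≤ i ∧ i ≤ d then ContinuousLinearMap.proj ⟨i - 1, by omega⟩ else 0

@[simp]
lemma padCLM_apply (i : ℕ) (u : Fin d → ℝ) : padCLM i u = pad1 u i := by
  unfold padCLM pad1
  split_ifs <;> rfl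

end Padding

section Telescope

variable {m n : ℕ}

/-- The entry in row `K`, column `L`, counted from 1 as in `pad1`, and `0` outside the matrix. -/
def entry (K L : ℕ) : (Fin m → Fin n → ℝ) →L[ℝ] ℝ :=
  (padCLM K).comp (ContinuousLinearMap.pi fun k => (padCLM L).comp (ContinuousLinearMap.proj k))

lemma entry_apply (K L : ℕ) (Q : Fin m → Fin n → ℝ) :
    entry K L Q = pad1 (fun k => pad1 (Q k) L) K := by
  simp [entry]

def IsTelescope (R : ℕ → ℕ → ℝ) (Q : Fin m → Fin n → ℝ) : Prop :=
  ∀ k l, Q k l = R k (l + 1) - R (k + 1) l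

def BoxSupported (m n : ℕ) (R : ℕ → ℕ → ℝ) : Prop :=
  ∀ p q, p = 0 ∨ m ≤ p ∨ q = 0 ∨ n ≤ q → R p q = 0

variable {R : ℕ → ℕ → ℝ} {Q : Fin m → Fin n → ℝ}

lemma entry_of_isTelescope (hQ : IsTelescope R Q) (hR : BoxSupported m n R) {K L : ℕ}
    (hK : 1 ≤ K) (hL : 1 ≤ L) : entry K L Q = R (K - 1) L - R K (L - 1) := by
  rw [entry_apply]
  by_cases h : K ≤ m ∧ L ≤ n
  · rw [pad1_of_le _ hK h.1, pad1_of_le _ hL h.2, hQ]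
    simp only [Nat.sub_add_cancel hK, Nat.sub_add_cancel hL]
  · rw [hR (K - 1) L (by omega), hR K (L - 1) (by omega), sub_zero]
    rcases not_and_or.1 h with h | h
    · exact pad1_eq_zero _ (by omega)
    · rw [show (fun k => pad1 (Q k) L) = 0 from funext fun k => pad1_eq_zero _ (by omega),
        ← padCLM_apply, map_zero]

lemma sum_antidiagonal_row_of_isTelescope (hQ : IsTelescope R Q) (hR : BoxSupported m n R)
    (L : ℕ) (k : Fin m) :
    (∑ j : Fin n, if (k : ℕ) + j = L then Q k j else 0) =
      R k (L + 1 - k) - R (k + 1) (L + 1 - (k + 1)) := by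
  by_cases hk : (k : ℕ) ≤ L ∧ L - k < n
  · rw [Fintype.sum_eq_single ⟨L - k, hk.2⟩ fun j hj => if_neg fun h => hj (Fin.ext (by simp; omega))]
    rw [if_pos (by simp; omega), hQ]
    congr 2 <;> dsimp only <;> omega
  · rw [Finset.sum_eq_zero fun j _ => if_neg (by omega), hR _ _ (by omega),
      hR _ _ (by omega), sub_zero]

lemma liftS_eq_zero_of_isTelescope (hQ : IsTelescope R Q) (hR : BoxSupported m n R) :
    liftS m n Q = 0 := by
  funext L
  simp only [liftS, Pi.zero_apply, sum_antidiagonal_row_of_isTelescope hQ hR]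
  rw [Fin.sum_univ_eq_sum_range (fun k => R k (L + 1 - k) - R (k + 1) (L + 1 - (k + 1))),
    Finset.sum_range_sub', hR 0 _ (by omega), hR m _ (by omega), sub_zero]

def telescopeMinor (Q : Fin m → Fin n → ℝ) : ℝ :=
  entry 1 2 Q * (entry 1 4 Q + entry 2 3 Q) - entry 1 3 Q * (entry 1 3 Q + entry 2 2 Q)

lemma telescopeMinor_of_isTelescope (hQ : IsTelescope R Q) (hR : BoxSupported m n R) :
    telescopeMinor Q = R 1 1 * R 2 2 - R 1 2 * R 2 1 := by
  have e : ∀ K L, 1 ≤ K → 1 ≤ L → entry K L Q = R (K - 1) L - R K (L - 1) :=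
    fun K L => entry_of_isTelescope hQ hR
  rw [telescopeMinor, e 1 2 le_rfl (by norm_num), e 1 3 le_rfl (by norm_num),
    e 1 4 le_rfl (by norm_num), e 2 3 (by norm_num) (by norm_num), e 2 2 (by norm_num) (by norm_num)]
  norm_num [hR 0 _ (Or.inl rfl)]
  ring

lemma telescopeMinor_eq_zero_of_mem_N0set {Q : Fin m → Fin n → ℝ} (hQ : Q ∈ N0set m n) :
    telescopeMinor Q = 0 := by
  obtain ⟨u, v, huv⟩ := hQ
  have hR : BoxSupported m n fun p q => -(pad1 u p * pad1 v q) := by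
    intro p q h
    rcases h with h | h | h | h
    · simp [pad1_eq_zero u (i := p) (by omega)]
    · simp [pad1_eq_zero u (i := p) (by omega)]
    · simp [pad1_eq_zero v (i := q) (by omega)]
    · simp [pad1_eq_zero v (i := q) (by omega)]
  rw [telescopeMinor_of_isTelescope (fun k l => by rw [huv]; ring) hR]
  ring

end Telescope

lemma rank_vecMulVec_add_vecMulVec_le {ι κ α : Type*} [Fintype ι] [Fintype κ] [CommRing α]
    [StrongRankCondition α] (x₁ x₂ : ι → α) (y₁ y₂ : κ → α) :
    (Matrix.vecMulVec x₁ y₁ + Matrix.vecMulVec x₂ y₂).rank ≤ 2 := by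
  have h : Matrix.vecMulVec x₁ y₁ + Matrix.vecMulVec x₂ y₂ =
      Matrix.of (fun i (r : Fin 2) => ![x₁ i, x₂ i] r) * Matrix.of fun r j => ![y₁ j, y₂ j] r := by
    ext i j
    simp [Matrix.mul_apply, Matrix.vecMulVec_apply, Fin.sum_univ_two]
  rw [h]
  exact (Matrix.rank_mul_le_left _ _).trans ((Matrix.rank_le_card_width _).trans (by simp))

abbrev Param (m n : ℕ) : Type := (Fin (m - 3) → ℝ) × (Fin (n - 2) → ℝ) × ℝ × ℝ

section Family

variable {m n : ℕ}

lemma finrank_param (hm : 3 ≤ m) (hn : 2 ≤ n) : finrank ℝ (Param m n) = m + n - 3 := by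
  simp only [Module.finrank_prod, Module.finrank_fin_fun, Module.finrank_self]
  omega

/-- For `θ = (a, b, α, β)`, `coefA θ` and `coefB θ` are the coefficients of `A` and `B`, and
`primitive θ p q` is the coefficient of `xᵖ y^q` in `A(x) B(y) K(x, y)`. At `p = 0` the truncated
`p - 1` is harmless since `coefA θ 0 = 0`. -/
def coefA (θ : Param m n) (i : ℕ) : ℝ := (if i = 1 then 1 else 0) + padCLM (i - 1) θ.1

def coefB (θ : Param m n) (j : ℕ) : ℝ := padCLM j θ.2.1

def primitive (θ : Param m n) (p q : ℕ) : ℝ :=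
  coefA θ p * coefB θ q + θ.2.2.2 * (coefA θ p * coefB θ (q - 1) + coefA θ (p - 1) * coefB θ q)
    + θ.2.2.1 * (coefA θ (p - 1) * coefB θ (q - 1))

variable (m n) in
def family (θ : Param m n) : Fin m → Fin n → ℝ :=
  fun k l => primitive θ k (l + 1) - primitive θ (k + 1) l

lemma family_isTelescope (θ : Param m n) : IsTelescope (primitive θ) (family m n θ) :=
  fun _ _ => rfl

lemma coefA_eq_zero (hm : 3 ≤ m) (θ : Param m n) {i : ℕ} (h : i = 0 ∨ m - 1 ≤ i) :
    coefA θ i = 0 := by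
  rw [coefA, if_neg (by omega), zero_add, padCLM_apply]
  exact pad1_eq_zero _ (by omega)

lemma coefB_eq_zero (θ : Param m n) {j : ℕ} (h : j = 0 ∨ n - 1 ≤ j) : coefB θ j = 0 := by
  rw [coefB, padCLM_apply]
  exact pad1_eq_zero _ (by omega)

lemma primitive_boxSupported (hm : 3 ≤ m) (θ : Param m n) : BoxSupported m n (primitive θ) := by
  intro p q h
  rcases h with h | h | h | h <;>
    simp (disch := omega) only [primitive, coefA_eq_zero hm, coefB_eq_zero] <;> ring

lemma rank_family_le_two (θ : Param m n) : (Matrix.of (family m n θ)).rank ≤ 2 := by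
  have h : Matrix.of (family m n θ) =
      Matrix.vecMulVec (fun k : Fin m => coefA θ k + θ.2.2.2 * coefA θ (k - 1))
        (fun l : Fin n => coefB θ (l + 1) - θ.2.2.1 * coefB θ (l - 1)) +
      Matrix.vecMulVec (fun k : Fin m => θ.2.2.1 * coefA θ (k - 1) - coefA θ (k + 1))
        (fun l : Fin n => coefB θ l + θ.2.2.2 * coefB θ (l - 1)) := by
    ext k l
    simp only [Matrix.of_apply, Matrix.add_apply, Matrix.vecMulVec_apply, family, primitive,
      Nat.add_sub_cancel]
    ring
  rw [h]
  exact rank_vecMulVec_add_vecMulVec_le _ _ _ _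

lemma family_mem_rankTwoNull (hm : 3 ≤ m) (θ : Param m n) :
    Matrix.of (family m n θ) ∈ rankTwoNull m n :=
  ⟨rank_family_le_two θ,
    liftS_eq_zero_of_isTelescope (family_isTelescope θ) (primitive_boxSupported hm θ)⟩

def baseParam : Param m n := (0, fun j => if (j : ℕ) = 0 then 1 else 0, 1, 0)

lemma coefA_baseParam (i : ℕ) : coefA (baseParam : Param m n) i = if i = 1 then 1 else 0 := by
  simp [coefA, baseParam, pad1]

lemma coefB_baseParam (hn : 3 ≤ n) (j : ℕ) :
    coefB (baseParam : Param m n) j = if j = 1 then 1 else 0 := by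
  simp only [coefB, baseParam, padCLM_apply, pad1]
  split_ifs <;> first | rfl | omega

lemma telescopeMinor_family_baseParam (hm : 3 ≤ m) (hn : 3 ≤ n) :
    telescopeMinor (family m n baseParam) = 1 := by
  rw [telescopeMinor_of_isTelescope (family_isTelescope _) (primitive_boxSupported hm _)]
  simp only [primitive, coefA_baseParam, coefB_baseParam hn]
  norm_num [baseParam]

lemma contDiff_family : ContDiff ℝ 1 (family m n) := by
  unfold family primitive coefA coefB
  fun_prop

end Family

section Linearization

variable {m n : ℕ}

def coordA (i : ℕ) : Param m n →L[ℝ] ℝ := (padCLM (i - 1)).comp (ContinuousLinearMap.fst ℝ _ _)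

def coordB (j : ℕ) : Param m n →L[ℝ] ℝ :=
  (padCLM j).comp ((ContinuousLinearMap.fst ℝ _ _).comp (ContinuousLinearMap.snd ℝ _ _))

def coordAlpha : Param m n →L[ℝ] ℝ :=
  (ContinuousLinearMap.fst ℝ _ _).comp
    ((ContinuousLinearMap.snd ℝ _ _).comp (ContinuousLinearMap.snd ℝ _ _))

def coordBeta : Param m n →L[ℝ] ℝ :=
  (ContinuousLinearMap.snd ℝ _ _).comp
    ((ContinuousLinearMap.snd ℝ _ _).comp (ContinuousLinearMap.snd ℝ _ _))

lemma hasStrictFDerivAt_coefA (i : ℕ) (θ : Param m n) :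
    HasStrictFDerivAt (fun θ : Param m n => coefA θ i) (coordA i) θ :=
  (coordA i).hasStrictFDerivAt.const_add _

lemma hasStrictFDerivAt_coefB (j : ℕ) (θ : Param m n) :
    HasStrictFDerivAt (fun θ : Param m n => coefB θ j) (coordB j) θ :=
  (coordB j).hasStrictFDerivAt

def tangentR (p q : ℕ) : Param m n →L[ℝ] ℝ :=
  let A := coefA (baseParam : Param m n)
  let B := coefB (baseParam : Param m n)
  B q • coordA p + A p • coordB q + (A p * B (q - 1) + A (p - 1) * B q) • coordBeta
    + B (q - 1) • coordA (p - 1) + A (p - 1) • coordB (q - 1) + (A (p - 1) * B (q - 1)) • coordAlpha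

lemma hasStrictFDerivAt_primitive (p q : ℕ) :
    HasStrictFDerivAt (fun θ : Param m n => primitive θ p q) (tangentR p q) baseParam := by
  have hA := hasStrictFDerivAt_coefA (m := m) (n := n) (θ := baseParam)
  have hB := hasStrictFDerivAt_coefB (m := m) (n := n) (θ := baseParam)
  refine HasStrictFDerivAt.congr_fderiv ((((hA p).mul (hB q)).add
    (coordBeta.hasStrictFDerivAt.mul (((hA p).mul (hB (q - 1))).add ((hA (p - 1)).mul (hB q))))).add
    (coordAlpha.hasStrictFDerivAt.mul ((hA (p - 1)).mul (hB (q - 1))))) ?_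
  refine ContinuousLinearMap.ext fun v => ?_
  simp [tangentR, coordAlpha, coordBeta, baseParam]
  ring

lemma tangentR_apply (hn : 3 ≤ n) (p q : ℕ) (v : Param m n) :
    tangentR p q v = (if q = 1 then pad1 v.1 (p - 1) else 0) + (if p = 1 then pad1 v.2.1 q else 0)
      + (if p = 1 ∧ q = 2 ∨ p = 2 ∧ q = 1 then v.2.2.2 else 0)
      + (if q = 2 then pad1 v.1 (p - 2) else 0) + (if p = 2 then pad1 v.2.1 (q - 1) else 0)
      + (if p = 2 ∧ q = 2 then v.2.2.1 else 0) := by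
  simp only [tangentR, coefA_baseParam, coefB_baseParam hn, coordA, coordB, coordAlpha, coordBeta,
    add_apply, smul_apply, ContinuousLinearMap.comp_apply, padCLM_apply]
  split_ifs <;> simp_all [Nat.sub_sub]

lemma tangentR_boxSupported (hm : 3 ≤ m) (hn : 3 ≤ n) (v : Param m n) :
    BoxSupported m n fun p q => tangentR p q v := by
  intro p q h
  rcases h with h | h | h | h <;> simp (disch := omega) [tangentR_apply hn, pad1_eq_zero] <;>
    rw [if_neg (by omega), if_neg (by omega), add_zero]

def tangentF : Param m n →L[ℝ] (Fin m → Fin n → ℝ) :=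
  ContinuousLinearMap.pi fun k =>
    ContinuousLinearMap.pi fun l => tangentR k (l + 1) - tangentR (k + 1) l

lemma tangentF_isTelescope (v : Param m n) :
    IsTelescope (fun p q => tangentR p q v) (tangentF v) :=
  fun _ _ => rfl

lemma hasStrictFDerivAt_family :
    HasStrictFDerivAt (family m n) (tangentF : Param m n →L[ℝ] _) baseParam :=
  hasStrictFDerivAt_pi.2 fun _ => hasStrictFDerivAt_pi.2 fun _ =>
    (hasStrictFDerivAt_primitive _ _).sub (hasStrictFDerivAt_primitive _ _)

-- For `v = (a, b, α, β)` the first column of `tangentF v` is `(0, b₀, a₀ + β, a₁, a₂, …)` and its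
-- first row is `(0, -b₀, -(b₁ + β), -b₂, …)`; a few interior entries separate `α` and `β`.
def tangentLeftInverse : (Fin m → Fin n → ℝ) →L[ℝ] Param m n :=
  (ContinuousLinearMap.pi fun i : Fin (m - 3) =>
      if (i : ℕ) = 0 then entry 4 2 + entry 5 1 else entry (i + 3) 1).prod <|
    (ContinuousLinearMap.pi fun j : Fin (n - 2) =>
      if (j : ℕ) = 1 then -(entry 1 5 + entry 2 4) else -entry 1 (j + 2)).prod <|
    (entry 3 2 + entry 1 2 + entry 4 1).prod (entry 3 1 - entry 4 2 - entry 5 1)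

lemma tangentLeftInverse_comp_tangentF (hm : 3 ≤ m) (hn : 3 ≤ n) :
    tangentLeftInverse.comp tangentF = ContinuousLinearMap.id ℝ (Param m n) := by
  refine ContinuousLinearMap.ext fun v => ?_
  have e (K L : ℕ) (hK : 1 ≤ K) (hL : 1 ≤ L) :
      entry K L (tangentF v) = tangentR (K - 1) L v - tangentR K (L - 1) v :=
    entry_of_isTelescope (tangentF_isTelescope v) (tangentR_boxSupported hm hn v) hK hL
  refine Prod.ext (funext fun i => ?_) (Prod.ext (funext fun j => ?_) (Prod.ext ?_ ?_))
  · by_cases hi : (i : ℕ) = 0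
    · have h := pad1_succ v.1 i
      simp only [hi, zero_add] at h
      simp (disch := omega) [tangentLeftInverse, e, tangentR_apply hn, hi, h, pad1_eq_zero]
    · simp (disch := omega) [tangentLeftInverse, e, tangentR_apply hn, hi, pad1_succ, pad1_eq_zero]
  · by_cases hj : (j : ℕ) = 1
    · have h := pad1_succ v.2.1 j
      simp only [hj] at h
      simp (disch := omega) [tangentLeftInverse, e, tangentR_apply hn, hj, h, pad1_eq_zero]
    · simp (disch := omega) [tangentLeftInverse, e, tangentR_apply hn, hj, pad1_succ, pad1_eq_zero]
  · simp (disch := omega) [tangentLeftInverse, e, tangentR_apply hn, pad1_eq_zero]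
    ring
  · simp (disch := omega) [tangentLeftInverse, e, tangentR_apply hn, pad1_eq_zero]

end Linearization

open scoped ENNReal in
theorem dimH_image_eq_finrank_of_leftInverse {E F : Type*} [NormedAddCommGroup E]
    [NormedSpace ℝ E] [FiniteDimensional ℝ E] [NormedAddCommGroup F] [NormedSpace ℝ F]
    {f : E → F} {f' : E →L[ℝ] F} {L : F →L[ℝ] E} {x : E} {U : Set E} (hf : ContDiff ℝ 1 f)
    (hf' : HasStrictFDerivAt f f' x) (hL : L.comp f' = ContinuousLinearMap.id ℝ E)
    (hU : U ∈ 𝓝 x) : dimH (f '' U) = finrank ℝ E := by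
  refine le_antisymm ((dimH_mono (image_subset_range f U)).trans hf.dimH_range_le) ?_
  have hLf : HasStrictFDerivAt (fun y => L (f y))
      ((ContinuousLinearEquiv.refl ℝ E : E ≃L[ℝ] E) : E →L[ℝ] E) x := by
    simpa [hL] using L.hasStrictFDerivAt.comp x hf'
  have hopen : (fun y => L (f y)) '' U ∈ 𝓝 (L (f x)) :=
    hLf.map_nhds_eq_of_equiv ▸ image_mem_map hU
  calc (finrank ℝ E : ℝ≥0∞) = dimH ((fun y => L (f y)) '' U) := (Real.dimH_of_mem_nhds hopen).symm
    _ = dimH (L '' (f '' U)) := by rw [image_image]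
    _ ≤ dimH (f '' U) := L.lipschitz.dimH_image_le _

end LiftedConvolution

open LiftedConvolution

/-- for `m, n ≥ 3` there is a set `M ⊆ N(S_{(m,n)}, 2)` of Hausdorff
dimension `m + n − 3` none of whose elements is representable in `N0(m,n)`-form. -/
theorem stmt1 (m n : ℕ) (hm : 3 ≤ m) (hn : 3 ≤ n) :
    ∃ M : Set (Matrix (Fin m) (Fin n) ℝ),
      M ⊆ rankTwoNull m n ∧ dimH M = ((m + n - 3 : ℕ) : ENNReal) ∧
      ∀ Q ∈ M, Q ∉ N0set m n := by
  let U := {θ : Param m n | telescopeMinor (family m n θ) ≠ 0}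
  have hU : U ∈ 𝓝 baseParam := by
    refine (isOpen_ne_fun ?_ continuous_const).mem_nhds ?_
    · have hfamily := (contDiff_family (m := m) (n := n)).continuous
      unfold telescopeMinor
      fun_prop
    · simp [telescopeMinor_family_baseParam hm hn]
  refine ⟨(fun θ => Matrix.of (family m n θ)) '' U, ?_, ?_, ?_⟩
  · rintro _ ⟨θ, -, rfl⟩
    exact family_mem_rankTwoNull hm θ
  · rw [← finrank_param hm (by omega)]
    exact dimH_image_eq_finrank_of_leftInverse contDiff_family hasStrictFDerivAt_family
      (tangentLeftInverse_comp_tangentF hm hn) hU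
  · rintro _ ⟨θ, hθ, rfl⟩ hN0
    exact hθ (telescopeMinor_eq_zero_of_mem_N0set hN0)
end
end

section
/- For all integers m, n ≥ 3, outside the exceptional set M(m,n) the rank-two null space is exactly the union of the two parametrized families: N(S_{(m,n)}, 2) \ M(m,n) = (N0(m,n) ∪ N2(m,n)) \ M(m,n). -/
open scoped BigOperators
open MeasureTheory

noncomputable section

/-!
Write a rank-two `Q` as `a bᵀ + c dᵀ`. The anti-diagonals of length one show that `S(Q) = 0`
forces `Q(1,1) = Q(m,n) = 0`. If moreover `Q(m,1) ≠ 0`, replacing `(a, c)` by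
`(a(m) c − c(m) a, b(1) a + d(1) c)` and `(b, d)` by the dual change of basis (of determinant
`−Q(m,1)`) makes `a(m) = c(1) = b(1) = d(n) = 0`, which is exactly the shape
`u₁(k) v₁(l−1) + u₂(k−1) v₂(l)`; the case `Q(1,n) ≠ 0` is the transpose. Reading vectors as
polynomials, `S(a bᵀ + c dᵀ)` is the coefficient vector of `a b + c d`, so the shift turns
`S_{(m,n)}(Q) = 0` into `X · S_{(m−1,n−1)}(u₁ v₁ᵀ + u₂ v₂ᵀ) = 0`. If `u₁ v₁ᵀ + u₂ v₂ᵀ = 0`, then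
`Q` lies in `N0`, otherwise in `N2`.
-/

namespace Matrix

variable {K : Type*} [Field K] {m n : Type*} [Fintype n]

theorem exists_eq_mul_of_rank_le [Fintype m] {k : ℕ} (A : Matrix m n K) (h : A.rank ≤ k) :
    ∃ (B : Matrix m (Fin k) K) (C : Matrix (Fin k) n K), A = B * C := by
  rw [rank_eq_finrank_span_cols] at h
  obtain ⟨f, -, hf, -⟩ := Submodule.exists_fun_fin_finrank_span_eq K (Set.range A.col)
  let g : Fin k → m → K := fun i => if hi : (i : ℕ) < _ then f ⟨i, hi⟩ else 0
  have hfg : Set.range f ⊆ Set.range g := by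
    rintro _ ⟨i, rfl⟩
    exact ⟨Fin.castLE h i, by simp [g]⟩
  have hcol (j : n) : ∃ c : Fin k → K, ∑ i, c i • g i = A.col j := by
    rw [← Submodule.mem_span_range_iff_exists_fun]
    refine Submodule.span_mono hfg ?_
    rw [hf]
    exact Submodule.subset_span ⟨j, rfl⟩
  choose c hc using hcol
  refine ⟨of fun x i => g i x, of fun i j => c j i, ?_⟩
  ext x j
  simpa [mul_apply, mul_comm] using (congrFun (hc j) x).symm

theorem rank_mul_le_card_inner {o : Type*} [Fintype o] (B : Matrix m o K) (C : Matrix o n K) :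
    (B * C).rank ≤ Fintype.card o :=
  (rank_mul_le_left B C).trans (rank_le_card_width B)

end Matrix

namespace Polynomial

variable {R : Type*} [Semiring R] [DecidableEq R] {m n : ℕ}

theorem coeff_ofFn (u : Fin n → R) (i : ℕ) :
    (ofFn n u).coeff i = if h : i < n then u ⟨i, h⟩ else 0 := by
  split_ifs with h
  · exact ofFn_coeff_eq_val_of_lt u h
  · exact ofFn_coeff_eq_zero_of_ge u (not_lt.mp h)

theorem coeff_ofFn_mul_ofFn (a : Fin m → R) (b : Fin n → R) (l : ℕ) :
    (ofFn m a * ofFn n b).coeff l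
      = ∑ k : Fin m, ∑ j : Fin n, if (k : ℕ) + j = l then a k * b j else 0 := by
  simp only [ofFn_eq_sum_monomial, Finset.sum_mul_sum, monomial_mul_monomial, finsetSum_coeff,
    coeff_monomial]

end Polynomial

namespace LiftedConvolution

open Polynomial
open scoped Matrix

variable {m n : ℕ}

def outerPair (u₁ u₂ : Fin m → ℝ) (v₁ v₂ : Fin n → ℝ) : Matrix (Fin m) (Fin n) ℝ :=
  Matrix.of fun i j => u₁ i * v₁ j + u₂ i * v₂ j

theorem outerPair_eq_mul (u₁ u₂ : Fin m → ℝ) (v₁ v₂ : Fin n → ℝ) :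
    outerPair u₁ u₂ v₁ v₂ = Matrix.of (fun i t => ![u₁ i, u₂ i] t) * Matrix.of ![v₁, v₂] := by
  ext i j
  simp [outerPair, Matrix.mul_apply, Fin.sum_univ_two]

theorem rank_outerPair_le (u₁ u₂ : Fin m → ℝ) (v₁ v₂ : Fin n → ℝ) :
    (outerPair u₁ u₂ v₁ v₂).rank ≤ 2 :=
  outerPair_eq_mul u₁ u₂ v₁ v₂ ▸ (Matrix.rank_mul_le_card_inner _ _).trans_eq (Fintype.card_fin 2)

theorem exists_outerPair_of_rank_le_two {Q : Matrix (Fin m) (Fin n) ℝ} (h : Q.rank ≤ 2) :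
    ∃ u₁ u₂ v₁ v₂, Q = outerPair u₁ u₂ v₁ v₂ := by
  obtain ⟨B, C, rfl⟩ := Q.exists_eq_mul_of_rank_le h
  refine ⟨fun i => B i 0, fun i => B i 1, C 0, C 1, ?_⟩
  ext i j
  simp [outerPair, Matrix.mul_apply, Fin.sum_univ_two]

theorem liftS_outerPair (u₁ u₂ : Fin m → ℝ) (v₁ v₂ : Fin n → ℝ) (l : Fin (m + n - 1)) :
    liftS m n (outerPair u₁ u₂ v₁ v₂) l
      = (ofFn m u₁ * ofFn n v₁ + ofFn m u₂ * ofFn n v₂).coeff l := by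
  simp only [liftS, outerPair, Matrix.of_apply, coeff_add, coeff_ofFn_mul_ofFn,
    ← Finset.sum_add_distrib, ite_add_ite, add_zero]

theorem liftS_outerPair_eq_zero_iff (hm : 0 < m) (hn : 0 < n) (u₁ u₂ : Fin m → ℝ)
    (v₁ v₂ : Fin n → ℝ) :
    liftS m n (outerPair u₁ u₂ v₁ v₂) = 0 ↔ ofFn m u₁ * ofFn n v₁ + ofFn m u₂ * ofFn n v₂ = 0 := by
  have hdeg (a : Fin m → ℝ) (b : Fin n → ℝ) : (ofFn m a * ofFn n b).natDegree < m + n - 1 :=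
    have := ofFn_natDegree_lt hm a
    have := ofFn_natDegree_lt hn b
    natDegree_mul_le.trans_lt (by omega)
  constructor
  · intro h
    ext l
    rcases lt_or_ge l (m + n - 1) with hl | hl
    · simpa [liftS_outerPair] using congrFun h ⟨l, hl⟩
    · exact coeff_eq_zero_of_natDegree_lt
        ((natDegree_add_le _ _).trans_lt (max_lt (hdeg u₁ v₁) (hdeg u₂ v₂)) |>.trans_le hl)
  · intro h
    funext l
    simp [liftS_outerPair, h]

theorem liftS_apply_zero (hm : 0 < m) (hn : 0 < n) (Q : Matrix (Fin m) (Fin n) ℝ) :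
    liftS m n Q ⟨0, by omega⟩ = Q ⟨0, hm⟩ ⟨0, hn⟩ := by
  rw [liftS, Fintype.sum_eq_single ⟨0, hm⟩, Fintype.sum_eq_single ⟨0, hn⟩]
  · simp
  · exact fun j hj => if_neg fun h => hj (Fin.ext (by dsimp only at h ⊢; omega))
  · exact fun k hk => Finset.sum_eq_zero fun j _ =>
      if_neg fun h => hk (Fin.ext (by dsimp only at h ⊢; omega))

theorem liftS_apply_last (hm : 0 < m) (hn : 0 < n) (Q : Matrix (Fin m) (Fin n) ℝ) :
    liftS m n Q ⟨m + n - 2, by omega⟩ = Q ⟨m - 1, by omega⟩ ⟨n - 1, by omega⟩ := by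
  rw [liftS, Fintype.sum_eq_single ⟨m - 1, by omega⟩, Fintype.sum_eq_single ⟨n - 1, by omega⟩]
  · exact if_pos (by dsimp only; omega)
  · exact fun j hj => if_neg fun h => hj (Fin.ext (by dsimp only at h ⊢; omega))
  · exact fun k hk => Finset.sum_eq_zero fun j _ =>
      if_neg fun h => hk (Fin.ext (by dsimp only at h ⊢; omega))

theorem ofFn_pad1_succ {e : ℕ} (u : Fin e → ℝ) (he : e ≤ m) :
    ofFn m (fun k : Fin m => pad1 u (k + 1)) = ofFn e u := by
  ext i
  simp only [coeff_ofFn, pad1]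
  split_ifs <;> first | rfl | omega

theorem ofFn_pad1 {e : ℕ} (u : Fin e → ℝ) (he : e < m) :
    ofFn m (fun k : Fin m => pad1 u k) = X * ofFn e u := by
  ext i
  rcases i with _ | i
  · simp [coeff_ofFn, pad1]
  · simp only [coeff_X_mul, coeff_ofFn, pad1]
    split_ifs <;> first | rfl | omega

theorem pad1_neg {e : ℕ} (u : Fin e → ℝ) (i : ℕ) : pad1 (-u) i = -pad1 u i := by
  unfold pad1; split_ifs <;> simp

/-- `Q(k,l) = u₁(k)·v₁(l−1) + u₂(k−1)·v₂(l)` in the 1-based indexing of `N0set` and `N2set`. -/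
def shiftPair (u₁ u₂ : Fin (m - 1) → ℝ) (v₁ v₂ : Fin (n - 1) → ℝ) : Matrix (Fin m) (Fin n) ℝ :=
  outerPair (fun k => pad1 u₁ (k + 1)) (fun k => pad1 u₂ k) (fun l => pad1 v₁ l)
    (fun l => pad1 v₂ (l + 1))

theorem shiftPair_transpose (u₁ u₂ : Fin (m - 1) → ℝ) (v₁ v₂ : Fin (n - 1) → ℝ) :
    (shiftPair u₁ u₂ v₁ v₂)ᵀ = shiftPair v₂ v₁ u₂ u₁ := by
  ext i j
  simp only [shiftPair, outerPair, Matrix.transpose_apply, Matrix.of_apply]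
  ring

theorem liftS_shiftPair_eq_zero_iff (hm : 2 ≤ m) (hn : 2 ≤ n) (u₁ u₂ : Fin (m - 1) → ℝ)
    (v₁ v₂ : Fin (n - 1) → ℝ) :
    liftS m n (shiftPair u₁ u₂ v₁ v₂) = 0 ↔ liftS (m - 1) (n - 1) (outerPair u₁ u₂ v₁ v₂) = 0 := by
  rw [shiftPair, liftS_outerPair_eq_zero_iff (by omega) (by omega),
    liftS_outerPair_eq_zero_iff (by omega) (by omega), ofFn_pad1_succ _ (by omega),
    ofFn_pad1 _ (by omega), ofFn_pad1 _ (by omega), ofFn_pad1_succ _ (by omega)]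
  rw [show ofFn (m - 1) u₁ * (X * ofFn (n - 1) v₁) + X * ofFn (m - 1) u₂ * ofFn (n - 1) v₂
      = X * (ofFn (m - 1) u₁ * ofFn (n - 1) v₁ + ofFn (m - 1) u₂ * ofFn (n - 1) v₂) by ring,
    mul_eq_zero, or_iff_right X_ne_zero]

theorem shiftPair_mem_rankTwoNull_iff (hm : 2 ≤ m) (hn : 2 ≤ n) (u₁ u₂ : Fin (m - 1) → ℝ)
    (v₁ v₂ : Fin (n - 1) → ℝ) :
    shiftPair u₁ u₂ v₁ v₂ ∈ rankTwoNull m n ↔ liftS (m - 1) (n - 1) (outerPair u₁ u₂ v₁ v₂) = 0 :=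
  (and_iff_right (rank_outerPair_le _ _ _ _)).trans (liftS_shiftPair_eq_zero_iff hm hn _ _ _ _)

theorem mem_N0set_iff {Q : Matrix (Fin m) (Fin n) ℝ} :
    Q ∈ N0set m n ↔ ∃ u v, Q = shiftPair u u v (-v) := by
  constructor
  · rintro ⟨u, v, hQ⟩
    refine ⟨u, v, Matrix.ext fun k l => ?_⟩
    simp [hQ, shiftPair, outerPair, pad1_neg, sub_eq_add_neg]
  · rintro ⟨u, v, rfl⟩
    refine ⟨u, v, fun k l => ?_⟩
    simp [shiftPair, outerPair, pad1_neg, sub_eq_add_neg]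

theorem pad1_mul_pad1_eq_neg_of_outerPair_eq_zero {e f : ℕ} {u₁ u₂ : Fin e → ℝ}
    {v₁ v₂ : Fin f → ℝ} (h : outerPair u₁ u₂ v₁ v₂ = 0) (x y : ℕ) :
    pad1 u₂ x * pad1 v₂ y = -(pad1 u₁ x * pad1 v₁ y) := by
  unfold pad1
  split_ifs with hx hy
  · have hxy := congrFun (congrFun h ⟨x - 1, by omega⟩) ⟨y - 1, by omega⟩
    simp only [outerPair, Matrix.of_apply, Matrix.zero_apply] at hxy
    linear_combination hxy
  all_goals simp

theorem shiftPair_eq_of_outerPair_eq_zero {u₁ u₂ : Fin (m - 1) → ℝ} {v₁ v₂ : Fin (n - 1) → ℝ}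
    (h : outerPair u₁ u₂ v₁ v₂ = 0) : shiftPair u₁ u₂ v₁ v₂ = shiftPair u₁ u₁ v₁ (-v₁) := by
  ext k l
  simp only [shiftPair, outerPair, Matrix.of_apply, pad1_neg,
    pad1_mul_pad1_eq_neg_of_outerPair_eq_zero h]
  ring

theorem outerPair_eq_of_det_ne_zero (a c : Fin m → ℝ) (b d : Fin n → ℝ) {p q r s : ℝ}
    (hδ : p * s - q * r ≠ 0) :
    outerPair a c b d = outerPair (p • a + q • c) (r • a + s • c)
      ((p * s - q * r)⁻¹ • (s • b - r • d)) ((p * s - q * r)⁻¹ • (p • d - q • b)) := by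
  ext i j
  simp only [outerPair, Matrix.of_apply, Pi.add_apply, Pi.sub_apply, Pi.smul_apply, smul_eq_mul]
  field_simp
  ring

theorem pad1_init_succ (hm : 0 < m) (a : Fin m → ℝ) (ha : a ⟨m - 1, by omega⟩ = 0) (k : Fin m) :
    pad1 (fun i : Fin (m - 1) => a ⟨i, by omega⟩) (k + 1) = a k := by
  unfold pad1
  split_ifs with hk
  · rfl
  · rw [show k = ⟨m - 1, by omega⟩ from Fin.ext (by dsimp only; omega), ha]

theorem pad1_tail (hm : 0 < m) (c : Fin m → ℝ) (hc : c ⟨0, hm⟩ = 0) (k : Fin m) :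
    pad1 (fun i : Fin (m - 1) => c ⟨i + 1, by omega⟩) k = c k := by
  unfold pad1
  split_ifs with hk
  · exact congrArg c (Fin.ext (by dsimp only; omega))
  · rw [show k = ⟨0, hm⟩ from Fin.ext (by dsimp only; omega), hc]

theorem exists_outerPair_eq_shiftPair (hm : 0 < m) (hn : 0 < n) {a c : Fin m → ℝ}
    {b d : Fin n → ℝ} (ha : a ⟨m - 1, by omega⟩ = 0) (hc : c ⟨0, hm⟩ = 0)
    (hb : b ⟨0, hn⟩ = 0) (hd : d ⟨n - 1, by omega⟩ = 0) :
    ∃ u₁ u₂ v₁ v₂, outerPair a c b d = shiftPair u₁ u₂ v₁ v₂ := by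
  refine ⟨fun i => a ⟨i, by omega⟩, fun i => c ⟨i + 1, by omega⟩, fun j => b ⟨j + 1, by omega⟩,
    fun j => d ⟨j, by omega⟩, ?_⟩
  ext k l
  simp only [shiftPair, outerPair, Matrix.of_apply, pad1_init_succ hm a ha,
    pad1_init_succ hn d hd, pad1_tail hm c hc, pad1_tail hn b hb]

theorem exists_shiftPair_of_corner (hm : 0 < m) (hn : 0 < n) {Q : Matrix (Fin m) (Fin n) ℝ}
    (hrank : Q.rank ≤ 2) (h₀ : Q ⟨0, hm⟩ ⟨0, hn⟩ = 0)
    (h₁ : Q ⟨m - 1, by omega⟩ ⟨n - 1, by omega⟩ = 0)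
    (hcorner : Q ⟨m - 1, by omega⟩ ⟨0, hn⟩ ≠ 0) :
    ∃ u₁ u₂ v₁ v₂, Q = shiftPair u₁ u₂ v₁ v₂ := by
  obtain ⟨a, c, b, d, rfl⟩ := exists_outerPair_of_rank_le_two hrank
  simp only [outerPair, Matrix.of_apply] at h₀ h₁ hcorner
  set a₁ := a ⟨m - 1, by omega⟩
  set c₁ := c ⟨m - 1, by omega⟩
  set b₀ := b ⟨0, hn⟩
  set d₀ := d ⟨0, hn⟩
  have hδ : -c₁ * d₀ - a₁ * b₀ ≠ 0 := by
    contrapose! hcorner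
    linear_combination -hcorner
  rw [outerPair_eq_of_det_ne_zero a c b d hδ]
  apply exists_outerPair_eq_shiftPair hm hn
  all_goals simp only [Pi.add_apply, Pi.sub_apply, Pi.smul_apply, smul_eq_mul]
  · ring
  · linear_combination h₀
  · ring
  · linear_combination -(-c₁ * d₀ - a₁ * b₀)⁻¹ * h₁

theorem exists_shiftPair (hm : 0 < m) (hn : 0 < n) {Q : Matrix (Fin m) (Fin n) ℝ}
    (hQ : Q ∈ rankTwoNull m n)
    (hcorner : ¬(Q ⟨m - 1, by omega⟩ ⟨0, hn⟩ = 0 ∧ Q ⟨0, hm⟩ ⟨n - 1, by omega⟩ = 0)) :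
    ∃ u₁ u₂ v₁ v₂, Q = shiftPair u₁ u₂ v₁ v₂ := by
  have h₀ := liftS_apply_zero hm hn Q ▸ congrFun hQ.2 _
  have h₁ := liftS_apply_last hm hn Q ▸ congrFun hQ.2 _
  rcases not_and_or.mp hcorner with h | h
  · exact exists_shiftPair_of_corner hm hn hQ.1 h₀ h₁ h
  · obtain ⟨u₁, u₂, v₁, v₂, hT⟩ := exists_shiftPair_of_corner hn hm (Q := Qᵀ)
      (by rw [Matrix.rank_transpose]; exact hQ.1) h₀ h₁ h
    exact ⟨v₂, v₁, u₂, u₁, by rw [← shiftPair_transpose, ← hT, Matrix.transpose_transpose]⟩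

end LiftedConvolution

open LiftedConvolution

/-- for `m, n ≥ 3`, outside `M(m,n)` the rank-two null space is exactly
`N0(m,n) ∪ N2(m,n)`. -/
theorem stmt5 (m n : ℕ) (hm : 3 ≤ m) (hn : 3 ≤ n) :
    rankTwoNull m n \ Mexc m n (by omega) (by omega)
      = (N0set m n ∪ N2set m n) \ Mexc m n (by omega) (by omega) := by
  ext Q
  simp only [Set.mem_sdiff, Set.mem_union]
  refine and_congr_left fun hQM => ⟨fun hQ => ?_, ?_⟩
  · obtain ⟨u₁, u₂, v₁, v₂, rfl⟩ :=
      exists_shiftPair (by omega) (by omega) hQ fun h => hQM ⟨hQ, h⟩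
    have hW := (shiftPair_mem_rankTwoNull_iff (by omega) (by omega) _ _ _ _).mp hQ
    by_cases hW0 : outerPair u₁ u₂ v₁ v₂ = 0
    · exact Or.inl (mem_N0set_iff.mpr ⟨u₁, v₁, shiftPair_eq_of_outerPair_eq_zero hW0⟩)
    · exact Or.inr ⟨u₁, u₂, v₁, v₂, ⟨rank_outerPair_le _ _ _ _, hW⟩, hW0, fun _ _ => rfl⟩
  · rintro (hQ | ⟨u₁, u₂, v₁, v₂, hW, -, hQ⟩)
    · obtain ⟨u, v, rfl⟩ := mem_N0set_iff.mp hQ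
      have hW0 : outerPair u u v (-v) = 0 := by ext; simp [outerPair]
      rw [shiftPair_mem_rankTwoNull_iff (by omega) (by omega), hW0]
      ext; simp [liftS]
    · rw [show Q = shiftPair u₁ u₂ v₁ v₂ from Matrix.ext hQ,
        shiftPair_mem_rankTwoNull_iff (by omega) (by omega)]
      exact hW.2
end
end

section
/- Let d ≥ 2 be an even integer and let w ∈ ℝ^d satisfy w(1) ≠ 0 and w(d) ≠ 0. Then the quotient set Q∼(w,d) is non-empty. -/
open scoped BigOperators
open MeasureTheory

noncomputable section

/-!
Solving `w(j) = w*(j) cos γ - w*(j-1) sin γ` forward from `w*(0) = 0` gives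
`w*(n) cos^n γ = F_n(γ) := Σ_{i ≤ n} w(i) cos^{i-1} γ sin^{n-i} γ`, so a solution with
`w*(d) = 0` exists as soon as `F_d(γ) = 0` and `cos γ ≠ 0`. For even `d` the form `F_d` has odd
degree, hence `F_d(π) = -F_d(0)` and it vanishes somewhere on `[0, π]`; at a zero, `cos γ = 0`
would force `F_d(γ) = ± w(1) = 0`.
-/

open Real Set

/-- `hornerForm a c s n = Σ_{i=1}^n a i * c ^ (i - 1) * s ^ (n - i)`. -/
def hornerForm (a : ℕ → ℝ) (c s : ℝ) : ℕ → ℝ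
  | 0 => 0
  | n + 1 => a (n + 1) * c ^ n + hornerForm a c s n * s

namespace hornerForm

variable (a : ℕ → ℝ)

theorem succ_sub {c : ℝ} (hc : c ≠ 0) (s : ℝ) (n : ℕ) :
    hornerForm a c s (n + 1) / c ^ (n + 1) * c - hornerForm a c s n / c ^ n * s = a (n + 1) := by
  rw [hornerForm]
  field_simp
  ring

theorem zero_left (s : ℝ) (n : ℕ) : hornerForm a 0 s (n + 1) = a 1 * s ^ n := by
  induction n with
  | zero => simp [hornerForm]
  | succ n ih => rw [hornerForm, ih]; ring

theorem cos_sin_zero (n : ℕ) : hornerForm a (cos 0) (sin 0) (n + 1) = a (n + 1) := by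
  simp [hornerForm]

theorem cos_sin_pi (n : ℕ) :
    hornerForm a (cos π) (sin π) (n + 1) = a (n + 1) * (-1) ^ n := by
  simp [hornerForm]

theorem continuous_cos_sin (n : ℕ) : Continuous fun γ => hornerForm a (cos γ) (sin γ) n := by
  induction n with
  | zero => exact continuous_const
  | succ n ih => exact (continuous_const.mul (continuous_cos.pow n)).add (ih.mul continuous_sin)

theorem exists_cos_sin_eq_zero {d : ℕ} (hd : Even d) :
    ∃ γ ∈ Icc 0 π, hornerForm a (cos γ) (sin γ) d = 0 := by
  rcases d with _ | n
  · exact ⟨0, left_mem_Icc.mpr pi_pos.le, rfl⟩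
  have hn : Odd n := Nat.not_even_iff_odd.mp (Nat.even_add_one.mp hd)
  have hsign : (0 : ℝ) ∈
      uIcc (hornerForm a (cos 0) (sin 0) (n + 1)) (hornerForm a (cos π) (sin π) (n + 1)) := by
    rw [cos_sin_zero, cos_sin_pi, hn.neg_one_pow, mul_neg_one, mem_uIcc]
    rcases le_total 0 (a (n + 1)) with h | h
    · exact Or.inr ⟨by linarith, h⟩
    · exact Or.inl ⟨h, by linarith⟩
  obtain ⟨γ, hγ, hroot⟩ := intermediate_value_uIcc (continuous_cos_sin a _).continuousOn hsign
  exact ⟨γ, uIcc_of_le pi_pos.le ▸ hγ, hroot⟩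

theorem cos_ne_zero {d : ℕ} (hd : d ≠ 0) (ha : a 1 ≠ 0) {γ : ℝ}
    (hγ : hornerForm a (cos γ) (sin γ) d = 0) : cos γ ≠ 0 := by
  intro hc
  obtain ⟨n, rfl⟩ := Nat.exists_eq_succ_of_ne_zero hd
  have hs : sin γ ≠ 0 := by
    intro hs
    simpa [hc, hs] using sin_sq_add_cos_sq γ
  rw [hc, zero_left] at hγ
  exact mul_ne_zero ha (pow_ne_zero n hs) hγ

end hornerForm

theorem pad1_succ {d : ℕ} (u : Fin d → ℝ) (j : Fin d) : pad1 u (j + 1) = u j := by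
  simp [pad1, j.isLt]

theorem pad1_comp_succ {n : ℕ} (f : ℕ → ℝ) (h0 : f 0 = 0) (hn : f (n + 1) = 0) {i : ℕ}
    (hi : i ≤ n + 1) : pad1 (fun k : Fin n => f (k + 1)) i = f i := by
  unfold pad1
  split_ifs with h
  · exact congrArg f (Nat.sub_add_cancel h.1)
  · obtain rfl | rfl : i = 0 ∨ i = n + 1 := by omega
    exacts [h0.symm, hn.symm]

/-- for even `d ≥ 2` and `w ∈ ℝ^d` with `w(1) ≠ 0` and `w(d) ≠ 0`, the
quotient set `Q∼(w,d)` is non-empty. -/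
theorem stmt10 (d : ℕ) (hd : 2 ≤ d) (hde : Even d) (w : Fin d → ℝ)
    (h1 : w ⟨0, by omega⟩ ≠ 0) :
    (quotSet d w).Nonempty := by
  obtain ⟨γ, ⟨hγ0, hγπ⟩, hroot⟩ := hornerForm.exists_cos_sin_eq_zero (pad1 w) hde
  have hcos : cos γ ≠ 0 :=
    hornerForm.cos_ne_zero (pad1 w) (by omega) ((pad1_succ w ⟨0, by omega⟩).trans_ne h1) hroot
  set f : ℕ → ℝ := fun n => hornerForm (pad1 w) (cos γ) (sin γ) n / cos γ ^ n
  have hf0 : f 0 = 0 := by simp [f, hornerForm]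
  have hfd : f (d - 1 + 1) = 0 := by simp [f, Nat.sub_add_cancel (by omega : 1 ≤ d), hroot]
  refine ⟨(fun k : Fin (d - 1) => f (k + 1), γ), ⟨hγ0, by linarith [pi_pos]⟩, fun j => ?_⟩
  rw [pad1_comp_succ f hf0 hfd (by omega), pad1_comp_succ f hf0 hfd (by omega),
    hornerForm.succ_sub _ hcos, pad1_succ]
end
end

section
/- For d = 2 and any w ∈ ℝ² with w(1) ≠ 0 and w(2) ≠ 0, the quotient set Q∼(w,2) contains exactly two elements. -/
open scoped BigOperators
open MeasureTheory

noncomputable section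

/-!
Writing `z = w(1) - i·w(2)`, the two defining equations say exactly `w* · e^{iγ} = z`, i.e.
`(w*, γ)` is a polar representation of `z` in which the radius may be negative. Taking norms,
`|w*| = |z| > 0`, so `w* = ±|z|`; for each sign, `e^{iγ} = z / w*` is a point of the unit circle,
which is hit by exactly one angle `γ ∈ [0, 2π)`.
-/

open Complex Set

def signedPolarCoords (z : ℂ) : Set (ℝ × ℝ) :=
  {p | p.2 ∈ Ico 0 (2 * Real.pi) ∧ (p.1 : ℂ) * exp (p.2 * I) = z}

lemma exists_mem_Ico_ofReal_mul_exp_eq {r : ℝ} {z : ℂ} (hr : |r| = ‖z‖) :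
    ∃ γ ∈ Ico 0 (2 * Real.pi), (r : ℂ) * exp (γ * I) = z := by
  rcases eq_or_ne r 0 with rfl | hr0
  · refine ⟨0, ⟨le_rfl, Real.two_pi_pos⟩, ?_⟩
    rw [abs_zero, eq_comm, norm_eq_zero] at hr
    simp [hr]
  have hnorm : ‖z / r‖ = 1 := by
    rw [norm_div, norm_real, Real.norm_eq_abs, ← hr, div_self (abs_ne_zero.2 hr0)]
  have hunit : exp (arg (z / r) * I) = z / r := by
    simpa only [hnorm, ofReal_one, one_mul] using norm_mul_exp_arg_mul_I (z / r)
  obtain ⟨γ, hγ, hexp⟩ := Circle.periodic_exp.exists_mem_Ico₀ Real.two_pi_pos (arg (z / r))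
  refine ⟨γ, hγ, ?_⟩
  rw [← Circle.coe_exp, ← hexp, Circle.coe_exp, hunit, mul_div_cancel₀ _ (ofReal_ne_zero.2 hr0)]

lemma image_fst_signedPolarCoords (z : ℂ) :
    Prod.fst '' signedPolarCoords z = {r | |r| = ‖z‖} := by
  ext r
  constructor
  · rintro ⟨⟨r, γ⟩, ⟨-, rfl⟩, rfl⟩
    simp [norm_exp_ofReal_mul_I]
  · intro hr
    obtain ⟨γ, hγ, h⟩ := exists_mem_Ico_ofReal_mul_exp_eq hr
    exact ⟨(r, γ), ⟨hγ, h⟩, rfl⟩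

lemma injOn_fst_signedPolarCoords {z : ℂ} (hz : z ≠ 0) :
    InjOn Prod.fst (signedPolarCoords z) := by
  rintro ⟨r, γ⟩ ⟨hγ, h⟩ ⟨r', γ'⟩ ⟨hγ', h'⟩ (rfl : r = r')
  have hr : (r : ℂ) ≠ 0 := by rintro hr; simp [hr, eq_comm, hz] at h
  have hexp : Circle.exp γ = Circle.exp γ' := by
    ext1
    simpa only [Circle.coe_exp, mul_right_inj' hr] using h.trans h'.symm
  rw [show γ = γ' from Circle.exp_injOn_Ico (by simp) hγ hγ' hexp]

lemma ncard_signedPolarCoords {z : ℂ} (hz : z ≠ 0) : (signedPolarCoords z).ncard = 2 := by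
  have hpair : {r : ℝ | |r| = ‖z‖} = {‖z‖, -‖z‖} := by
    ext r
    simp [abs_eq (norm_nonneg z)]
  rw [← (injOn_fst_signedPolarCoords hz).ncard_image, image_fst_signedPolarCoords, hpair,
    ncard_pair (neg_lt_self (norm_pos_iff.2 hz)).ne']

lemma quotSet_two_eq_preimage (w : Fin 2 → ℝ) :
    quotSet 2 w = Prod.map (Equiv.funUnique (Fin 1) ℝ) id ⁻¹' signedPolarCoords ⟨w 0, -w 1⟩ := by
  ext ⟨u, γ⟩
  simp [quotSet, signedPolarCoords, pad1, Fin.forall_fin_two, Complex.ext_iff, eq_comm (a := w _),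
    neg_eq_iff_eq_neg]

theorem stmt11_general (w : Fin 2 → ℝ) (h1 : w 0 ≠ 0) :
    (quotSet 2 w).ncard = 2 := by
  have hz : (⟨w 0, -w 1⟩ : ℂ) ≠ 0 := fun h ↦ h1 (congrArg re h)
  rw [quotSet_two_eq_preimage, ncard_preimage_of_injective_subset_range, ncard_signedPolarCoords hz]
  · exact (Equiv.funUnique (Fin 1) ℝ).injective.prodMap Function.injective_id
  · simp

/-- for `d = 2` and `w ∈ ℝ²` with both entries nonzero, the quotient set
`Q∼(w,2)` has exactly two elements. -/
theorem stmt11 (w : Fin 2 → ℝ) (h1 : w 0 ≠ 0) (h2 : w 1 ≠ 0) :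
    (quotSet 2 w).ncard = 2 :=
  stmt11_general w h1
end
end

section
/- Let m, n ≥ 4 be even integers, let x ∈ ℝ^m be an arbitrary vector with x(1) ≠ 0, and let K = {w ∈ ℝ^m : w(1) ≠ 0} × ℝ^n. Then the set {y ∈ ℝ^n : (x,y) is identifiable with respect to linear convolution and K} has n-dimensional Lebesgue measure zero; equivalently, (x,y) is unidentifiable for almost every y with respect to any measure on ℝ^n that is absolutely continuous with respect to the n-dimensional Lebesgue measure. -/
open scoped BigOperators
open MeasureTheory

noncomputable section

/-!
Convolution is multiplication of the coefficient polynomials, so `(x, y)` is unidentifiable as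
soon as factors can be exchanged between `x` and `y` so that the degree bounds still hold, the
constant term of `x` stays nonzero, and `x` changes by more than a scalar. Since `n - 1` is odd,
a generic `y` has degree `n - 1` and hence a real root `r`, nonzero as `y(1) ≠ 0`. If
`deg x < m - 1` the factor `X - r` simply moves to `x`; otherwise `m - 1` is odd too, `x` has a
real root `s`, and `X - r` is traded for `X - s`, which changes `x` unless `r = s`. The excluded
`y` (with `y(1) = 0`, `y(n) = 0` or `y(s) = 0`) lie in three hyperplanes.
-/

open Polynomial Filter

def toPoly (d : ℕ) : (Fin d → ℝ) →ₗ[ℝ] ℝ[X] :=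
  ∑ i : Fin d, monomial (i : ℕ) ∘ₗ LinearMap.proj i

section toPoly

variable {d : ℕ}

lemma toPoly_apply (u : Fin d → ℝ) : toPoly d u = ∑ i : Fin d, monomial (i : ℕ) (u i) := by
  simp [toPoly, LinearMap.sum_apply]

lemma toPoly_single (i : Fin d) (c : ℝ) : toPoly d (Pi.single i c) = monomial (i : ℕ) c := by
  rw [toPoly_apply, Finset.sum_eq_single i (fun j _ hj => by simp [hj]) (by simp)]
  simp

lemma coeff_toPoly (u : Fin d → ℝ) (k : ℕ) :
    (toPoly d u).coeff k = if h : k < d then u ⟨k, h⟩ else 0 := by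
  simp only [toPoly_apply, finsetSum_coeff, coeff_monomial]
  split_ifs with h
  · rw [Finset.sum_eq_single (⟨k, h⟩ : Fin d) (fun j _ hj => if_neg (by simpa [Fin.ext_iff] using hj))
      (by simp)]
    simp
  · exact Finset.sum_eq_zero fun i _ => if_neg (by have := i.isLt; omega)

lemma natDegree_toPoly_le (u : Fin d → ℝ) : (toPoly d u).natDegree ≤ d - 1 :=
  natDegree_le_iff_coeff_eq_zero.mpr fun k hk => by
    rw [coeff_toPoly, dif_neg (by omega)]

lemma toPoly_coeff_eq {p : ℝ[X]} (hp : p.natDegree < d) :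
    toPoly d (fun i : Fin d => p.coeff i) = p := by
  ext k
  rw [coeff_toPoly]
  split_ifs with hk
  · rfl
  · exact (coeff_eq_zero_of_natDegree_lt (by omega)).symm

end toPoly

lemma conv_eq_coeff_toPoly_mul {m n : ℕ} (x : Fin m → ℝ) (y : Fin n → ℝ) (l : Fin (m + n - 1)) :
    conv x y l = (toPoly m x * toPoly n y).coeff l := by
  simp only [conv, toPoly_apply, Finset.sum_mul_sum, monomial_mul_monomial, finsetSum_coeff,
    coeff_monomial]

lemma exists_isRoot_of_odd_natDegree {p : ℝ[X]} (hp : Odd p.natDegree) : ∃ r, p.IsRoot r := by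
  have hp0 : p ≠ 0 := by rintro rfl; simp at hp
  -- `p(t) p(-t)` has leading coefficient `-lc(p)²`, so it is negative for large `t`.
  set q := p * p.comp (-X) with hq
  have hq_lc : q.leadingCoeff = -p.leadingCoeff ^ 2 := by
    rw [hq, leadingCoeff_mul, leadingCoeff_comp (by simp)]
    simp [hp.neg_one_pow, sq]
  have hq_deg : 0 < q.degree := by
    rw [← natDegree_pos_iff_degree_pos, hq, natDegree_mul' (by simp [hp0]), natDegree_comp]
    simpa using hp.pos
  obtain ⟨t, ht⟩ := ((q.tendsto_atBot_of_leadingCoeff_nonpos hq_deg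
    (by rw [hq_lc]; exact neg_nonpos.mpr (sq_nonneg _))).eventually (eventually_lt_atBot 0)).exists
  have hsign : p.eval t * p.eval (-t) < 0 := by simpa [hq] using ht
  have hzero : (0 : ℝ) ∈ Set.uIcc (p.eval t) (p.eval (-t)) := by
    rw [Set.mem_uIcc]
    rcases mul_neg_iff.mp hsign with h | h
    · exact Or.inr ⟨h.2.le, h.1.le⟩
    · exact Or.inl ⟨h.1.le, h.2.le⟩
  obtain ⟨r, -, hr⟩ := intermediate_value_uIcc p.continuous.continuousOn hzero
  exact ⟨r, hr⟩

lemma exists_eq_mul_X_sub_C_of_odd_natDegree {p : ℝ[X]} (hp : Odd p.natDegree) :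
    ∃ r Z, p = Z * (X - C r) ∧ Z.natDegree + 1 = p.natDegree := by
  obtain ⟨r, hr⟩ := exists_isRoot_of_odd_natDegree hp
  refine ⟨r, p /ₘ (X - C r), ?_, ?_⟩
  · rw [mul_comm, mul_divByMonic_eq_iff_isRoot.mpr hr]
  · rw [natDegree_divByMonic _ (monic_X_sub_C r), natDegree_X_sub_C]
    have := hp.pos
    omega

lemma exists_eq_mul_of_natDegree_le_odd {p : ℝ[X]} {d : ℕ} (hd : Odd d) (hp : p.natDegree ≤ d) :
    ∃ s W D, p = W * D ∧ W.natDegree < d ∧ D.natDegree ≤ 1 ∧ ∀ r ≠ s, D.eval r ≠ 0 := by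
  rcases hp.lt_or_eq with hlt | heq
  · exact ⟨0, p, 1, (mul_one p).symm, hlt, by simp, fun _ _ => by simp⟩
  · obtain ⟨s, W, hW, hWdeg⟩ := exists_eq_mul_X_sub_C_of_odd_natDegree (heq ▸ hd)
    refine ⟨s, W, X - C s, hW, by omega, by simp, fun r hrs => ?_⟩
    simpa [sub_eq_zero] using hrs

lemma MeasureTheory.Measure.addHaar_ker_eq_zero {E : Type*} [NormedAddCommGroup E] [NormedSpace ℝ E]
    [MeasurableSpace E] [BorelSpace E] [FiniteDimensional ℝ E] (μ : Measure E)
    [μ.IsAddHaarMeasure] {L : E →ₗ[ℝ] ℝ} (hL : L ≠ 0) : μ (LinearMap.ker L) = 0 :=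
  Measure.addHaar_submodule μ _ (by rwa [Ne, LinearMap.ker_eq_top])

lemma volume_setOf_coeff_toPoly_eq_zero {n k : ℕ} (hk : k < n) :
    volume {y : Fin n → ℝ | (toPoly n y).coeff k = 0} = 0 := by
  refine Measure.addHaar_ker_eq_zero (L := lcoeff ℝ k ∘ₗ toPoly n) volume fun h => ?_
  simpa [toPoly_single] using LinearMap.congr_fun h (Pi.single ⟨k, hk⟩ 1)

lemma volume_setOf_eval_toPoly_eq_zero {n : ℕ} (hn : 0 < n) (s : ℝ) :
    volume {y : Fin n → ℝ | (toPoly n y).eval s = 0} = 0 := by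
  refine Measure.addHaar_ker_eq_zero (L := leval s ∘ₗ toPoly n) volume fun h => ?_
  simpa [toPoly_single] using LinearMap.congr_fun h (Pi.single ⟨0, hn⟩ 1)

section Identifiable

variable {m n : ℕ} (hm : 0 < m) {x : Fin m → ℝ} {y : Fin n → ℝ}

lemma not_identifiable_of_mul_eq {P Q : ℝ[X]} (hPQ : P * Q = toPoly m x * toPoly n y)
    (hP : P.natDegree < m) (hQ : Q.natDegree < n) (hP0 : P.coeff 0 ≠ 0)
    (hPx : ∀ α : ℝ, α ≠ 0 → P ≠ α • toPoly m x) :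
    ¬ Identifiable {p : (Fin m → ℝ) × (Fin n → ℝ) | p.1 ⟨0, hm⟩ ≠ 0} (x, y) := by
  intro hid
  obtain ⟨α, hα, hx', -⟩ := hid ((fun i : Fin m => P.coeff i), (fun j : Fin n => Q.coeff j))
    hP0 (funext fun l => by
      rw [conv_eq_coeff_toPoly_mul, conv_eq_coeff_toPoly_mul, toPoly_coeff_eq hP,
        toPoly_coeff_eq hQ, hPQ])
  exact hPx α hα (by rw [← toPoly_coeff_eq hP, ← map_smul]; exact congrArg _ hx')

lemma not_identifiable_of_swap {W D Z : ℝ[X]} {r : ℝ} (hx : x ⟨0, hm⟩ ≠ 0)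
    (hxWD : toPoly m x = W * D) (hyZ : toPoly n y = Z * (X - C r)) (hr : r ≠ 0)
    (hDr : D.eval r ≠ 0) (hW : W.natDegree + 1 < m) (hZD : Z.natDegree + D.natDegree < n) :
    ¬ Identifiable {p : (Fin m → ℝ) × (Fin n → ℝ) | p.1 ⟨0, hm⟩ ≠ 0} (x, y) := by
  have hx0 : W.coeff 0 * D.coeff 0 ≠ 0 := by
    rwa [← mul_coeff_zero, ← hxWD, coeff_toPoly, dif_pos hm]
  have hW0 : W ≠ 0 := by rintro rfl; simp at hx0
  refine not_identifiable_of_mul_eq hm (P := W * (X - C r)) (Q := Z * D)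
    (by rw [hxWD, hyZ]; ring) ((natDegree_mul_le).trans_lt (by simpa using hW))
    ((natDegree_mul_le).trans_lt hZD) ?_ fun α hα hP => ?_
  · simpa [mul_coeff_zero, hr] using left_ne_zero_of_mul hx0
  · rw [hxWD, smul_eq_C_mul, mul_left_comm] at hP
    have hXD := congrArg (eval r) (mul_left_cancel₀ hW0 hP)
    simp [hα, hDr] at hXD

end Identifiable

/-- for even `m, n ≥ 4` and any `x ∈ ℝ^m` with `x(1) ≠ 0`, the set of
`y ∈ ℝ^n` such that `(x,y)` is identifiable w.r.t. `K = {w : w(1) ≠ 0} × ℝ^n` has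
`n`-dimensional Lebesgue measure zero. -/
theorem stmt12 (m n : ℕ) (hm : 4 ≤ m) (hn : 4 ≤ n) (hme : Even m) (hne : Even n)
    (x : Fin m → ℝ) (hx : x ⟨0, by omega⟩ ≠ 0) :
    MeasureTheory.volume {y : Fin n → ℝ |
      Identifiable {p : (Fin m → ℝ) × (Fin n → ℝ) | p.1 ⟨0, by omega⟩ ≠ 0} (x, y)} = 0 := by
  obtain ⟨s, W, D, hxWD, hW, hD, hDroot⟩ := exists_eq_mul_of_natDegree_le_odd
    (Nat.Even.sub_odd (by omega) hme odd_one) (natDegree_toPoly_le x)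
  refine measure_mono_null (fun y hy => ?_) (measure_union_null (measure_union_null
    (volume_setOf_coeff_toPoly_eq_zero (k := 0) (by omega))
    (volume_setOf_coeff_toPoly_eq_zero (k := n - 1) (by omega)))
    (volume_setOf_eval_toPoly_eq_zero (by omega) s))
  by_contra hy'
  simp only [Set.mem_union, Set.mem_ofPred_eq, not_or] at hy'
  obtain ⟨⟨hy0, hylead⟩, hys⟩ := hy'
  have hydeg : (toPoly n y).natDegree = n - 1 :=
    (natDegree_toPoly_le y).antisymm (le_natDegree_of_ne_zero hylead)
  obtain ⟨r, Z, hyZ, hZ⟩ := exists_eq_mul_X_sub_C_of_odd_natDegree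
    (hydeg ▸ Nat.Even.sub_odd (by omega) hne odd_one)
  have hr : (toPoly n y).IsRoot r := by simp [hyZ]
  have hr0 : r ≠ 0 := by rintro rfl; exact hy0 (by rwa [coeff_zero_eq_eval_zero])
  have hrs : r ≠ s := by rintro rfl; exact hys hr
  exact not_identifiable_of_swap (by omega) hx hxWD hyZ hr0 (hDroot r hrs) (by omega)
    (by omega) hy
end
end

section
/- Let m, n ≥ 5 be arbitrary integers and let K = {w ∈ ℝ^m : w(1) ≠ 0} × ℝ^n. Then there exists a set G ⊆ K of Hausdorff dimension m + n such that every pair (x,y) ∈ G is unidentifiable with respect to linear convolution and K. -/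
open scoped BigOperators
open MeasureTheory

noncomputable section

/-!
If the polynomial of `x` has a real root `r` and that of `y` a real root `s ≠ r`, exchanging the
factors `X - r` and `X - s` between the two polynomials leaves their product, hence `x ⋆ y`,
unchanged, while the new first factor is not proportional to the old one; for `s ≠ 0` the
constant coefficient stays nonzero, so the new pair lies in `K`. Roots are guaranteed by sign
changes on the disjoint intervals `[1, 2]` and `[3, 4]`, an open condition on `(x, y)` that
holds at `(X - 3/2, X - 7/2)`, so the set `G` of such pairs is a nonempty open set and has full
Hausdorff dimension.
-/

open Polynomial

section XSubCMul

variable {R : Type*} [Ring R] [Nontrivial R]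

lemma natDegree_X_sub_C_mul_eq (a b : R) (p : R[X]) :
    ((X - C a) * p).natDegree = ((X - C b) * p).natDegree := by
  rcases eq_or_ne p 0 with rfl | hp
  · simp
  · rw [(monic_X_sub_C a).natDegree_mul' hp, (monic_X_sub_C b).natDegree_mul' hp,
      natDegree_X_sub_C, natDegree_X_sub_C]

lemma ofFn_toFn_X_sub_C_mul [DecidableEq R] {d : ℕ} (hd : 0 < d) {v : Fin d → R} {a : R}
    {p : R[X]} (h : ofFn d v = (X - C a) * p) (b : R) :
    ofFn d (toFn d ((X - C b) * p)) = (X - C b) * p := by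
  apply ofFn_comp_toFn_eq_id_of_natDegree_lt
  rw [natDegree_X_sub_C_mul_eq b a, ← h]
  exact ofFn_natDegree_lt hd v

end XSubCMul

lemma conv_eq_toFn_mul {m n : ℕ} (x : Fin m → ℝ) (y : Fin n → ℝ) :
    conv x y = toFn (m + n - 1) (ofFn m x * ofFn n y) := by
  funext l
  simp only [conv, toFn, LinearMap.pi_apply, lcoeff_apply, ofFn_eq_sum_monomial,
    Finset.sum_mul_sum, finsetSum_coeff, monomial_mul_monomial, coeff_monomial]

theorem not_identifiable_of_isRoot {m n : ℕ} (hm : 0 < m) (hn : 0 < n) {x : Fin m → ℝ}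
    {y : Fin n → ℝ} {r s : ℝ} (hx0 : x ⟨0, hm⟩ ≠ 0) (hr : (ofFn m x).IsRoot r)
    (hs : (ofFn n y).IsRoot s) (hs0 : s ≠ 0) (hrs : r ≠ s) :
    ¬ Identifiable {q : (Fin m → ℝ) × (Fin n → ℝ) | q.1 ⟨0, hm⟩ ≠ 0} (x, y) := by
  obtain ⟨U, hU⟩ := dvd_iff_isRoot.2 hr
  obtain ⟨V, hV⟩ := dvd_iff_isRoot.2 hs
  have hx' := ofFn_toFn_X_sub_C_mul hm hU s
  have hy' := ofFn_toFn_X_sub_C_mul hn hV r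
  have hU0 : U.coeff 0 ≠ 0 := by
    rw [← ofFn_coeff_eq_val_of_lt x hm, hU, mul_coeff_zero] at hx0
    exact right_ne_zero_of_mul hx0
  intro hid
  obtain ⟨α, -, hα, -⟩ := hid (toFn m ((X - C s) * U), toFn n ((X - C r) * V))
    (by simpa [toFn, mul_coeff_zero] using And.intro hs0 hU0)
    (by rw [conv_eq_toFn_mul, conv_eq_toFn_mul, hx', hy', hU, hV]; ring_nf)
  have hfactor : X - C s = C α * (X - C r) := by
    have h := congrArg (ofFn m) hα
    rw [hx', map_smul, hU, smul_eq_C_mul, ← mul_assoc] at h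
    exact mul_right_cancel₀ (fun hU_zero => hU0 (by simp [hU_zero])) h
  have hrs_zero := congrArg (eval r) hfactor
  simp only [eval_sub, eval_X, eval_C, eval_mul, sub_self, mul_zero] at hrs_zero
  exact hrs (sub_eq_zero.1 hrs_zero)

def changesSign (d : ℕ) (a b : ℝ) : Set (Fin d → ℝ) :=
  {v | (ofFn d v).eval a < 0 ∧ 0 < (ofFn d v).eval b}

lemma isOpen_changesSign (d : ℕ) (a b : ℝ) : IsOpen (changesSign d a b) := by
  have hcont (t : ℝ) : Continuous fun v : Fin d → ℝ => (ofFn d v).eval t :=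
    ((leval t).comp (ofFn d)).continuous_of_finiteDimensional
  exact (isOpen_lt (hcont a) continuous_const).inter (isOpen_lt continuous_const (hcont b))

lemma exists_isRoot_of_mem_changesSign {d : ℕ} {a b : ℝ} (hab : a ≤ b) {v : Fin d → ℝ}
    (hv : v ∈ changesSign d a b) : ∃ r ∈ Set.Ioo a b, (ofFn d v).IsRoot r :=
  intermediate_value_Ioo hab (ofFn d v).continuous.continuousOn hv

lemma toFn_X_sub_C_mem_changesSign {d : ℕ} (hd : 1 < d) {a b c : ℝ} (hac : a < c)
    (hcb : c < b) : toFn d (X - C c) ∈ changesSign d a b := by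
  rw [changesSign, Set.mem_ofPred_eq,
    ofFn_comp_toFn_eq_id_of_natDegree_lt (by rwa [natDegree_X_sub_C])]
  simp only [eval_sub, eval_X, eval_C]
  constructor <;> linarith

/-- for `m, n ≥ 5` there exists a set `G ⊆ K = {w : w(1) ≠ 0} × ℝ^n` of
Hausdorff dimension `m + n` all of whose elements are unidentifiable. -/
theorem stmt13 (m n : ℕ) (hm : 5 ≤ m) (hn : 5 ≤ n) :
    ∃ G : Set ((Fin m → ℝ) × (Fin n → ℝ)),
      G ⊆ {p : (Fin m → ℝ) × (Fin n → ℝ) | p.1 ⟨0, by omega⟩ ≠ 0} ∧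
      dimH G = ((m + n : ℕ) : ENNReal) ∧
      ∀ p ∈ G, ¬ Identifiable {q : (Fin m → ℝ) × (Fin n → ℝ) | q.1 ⟨0, by omega⟩ ≠ 0} p := by
  let G : Set ((Fin m → ℝ) × (Fin n → ℝ)) :=
    {p | p.1 ⟨0, by omega⟩ ≠ 0 ∧ p.1 ∈ changesSign m 1 2 ∧ p.2 ∈ changesSign n 3 4}
  refine ⟨G, fun p hp => hp.1, ?_, ?_⟩
  · have hopen : IsOpen G :=
      (isOpen_ne_fun ((continuous_apply _).comp continuous_fst) continuous_const).inter
        (((isOpen_changesSign m 1 2).preimage continuous_fst).inter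
          ((isOpen_changesSign n 3 4).preimage continuous_snd))
    have hmem : (toFn m (X - C (3 / 2)), toFn n (X - C (7 / 2))) ∈ G :=
      ⟨by norm_num [toFn], toFn_X_sub_C_mem_changesSign (by omega) (by norm_num) (by norm_num),
        toFn_X_sub_C_mem_changesSign (by omega) (by norm_num) (by norm_num)⟩
    rw [Real.dimH_of_mem_nhds (hopen.mem_nhds hmem)]
    simp
  · rintro ⟨x, y⟩ ⟨hx0, hx, hy⟩
    obtain ⟨r, hr, hxr⟩ := exists_isRoot_of_mem_changesSign (by norm_num) hx
    obtain ⟨s, hs, hys⟩ := exists_isRoot_of_mem_changesSign (by norm_num) hy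
    exact not_identifiable_of_isRoot (by omega) (by omega) hx0 hxr hys
      (by linarith [hs.1]) (by linarith [hr.2, hs.1])
end
end

section
/- Let x₁, x₂ ∈ ℝ^m and y₁, y₂ ∈ ℝ^n satisfy x₁ ⋆ y₁ = x₂ ⋆ y₂, and let θ, φ ∈ ℝ be arbitrary. Define x₁' = x₁·cos θ − x₂·sin θ, y₁' = y₁·sin φ − y₂·cos φ, x₂' = x₁·cos φ − x₂·sin φ, and y₂' = y₁·sin θ − y₂·cos θ. Then x₁' ⋆ y₁' = x₂' ⋆ y₂'. -/
open scoped BigOperators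
open MeasureTheory

noncomputable section

/- Both sides expand by bilinearity, and their difference is `(a * c - b * d) • (B x₁ y₁ - B x₂ y₂)`;
the angles only supply the four scalars. -/
theorem LinearMap.map_sub_smul_sub_smul_eq_of_eq {R M N P : Type*} [CommRing R]
    [AddCommGroup M] [AddCommGroup N] [AddCommGroup P] [Module R M] [Module R N] [Module R P]
    (B : M →ₗ[R] N →ₗ[R] P) {x₁ x₂ : M} {y₁ y₂ : N} (h : B x₁ y₁ = B x₂ y₂) (a b c d : R) :
    B (a • x₁ - b • x₂) (c • y₁ - d • y₂) = B (d • x₁ - c • x₂) (b • y₁ - a • y₂) := by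
  simp only [map_sub, map_smul, LinearMap.sub_apply, LinearMap.smul_apply, h]
  module

section conv

variable {m n : ℕ}

theorem conv_add_left (x x' : Fin m → ℝ) (y : Fin n → ℝ) :
    conv (x + x') y = conv x y + conv x' y := by
  funext l
  simp only [conv, Pi.add_apply, add_mul, ite_add_zero, Finset.sum_add_distrib]

theorem conv_smul_left (c : ℝ) (x : Fin m → ℝ) (y : Fin n → ℝ) :
    conv (c • x) y = c • conv x y := by
  funext l
  simp only [conv, Pi.smul_apply, smul_eq_mul, Finset.mul_sum, mul_ite, mul_zero, mul_assoc]

theorem conv_add_right (x : Fin m → ℝ) (y y' : Fin n → ℝ) :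
    conv x (y + y') = conv x y + conv x y' := by
  funext l
  simp only [conv, Pi.add_apply, mul_add, ite_add_zero, Finset.sum_add_distrib]

theorem conv_smul_right (c : ℝ) (x : Fin m → ℝ) (y : Fin n → ℝ) :
    conv x (c • y) = c • conv x y := by
  funext l
  simp only [conv, Pi.smul_apply, smul_eq_mul, Finset.mul_sum, mul_ite, mul_zero, mul_left_comm]

variable (m n) in
def convBilin : (Fin m → ℝ) →ₗ[ℝ] (Fin n → ℝ) →ₗ[ℝ] (Fin (m + n - 1) → ℝ) :=
  LinearMap.mk₂ ℝ conv conv_add_left conv_smul_left conv_add_right conv_smul_right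

end conv

/-- the rotational ambiguity: if `x₁ ⋆ y₁ = x₂ ⋆ y₂` then for all angles
`θ, φ`, `(x₁ cos θ − x₂ sin θ) ⋆ (y₁ sin φ − y₂ cos φ)
       = (x₁ cos φ − x₂ sin φ) ⋆ (y₁ sin θ − y₂ cos θ)`. -/
theorem stmt16 (m n : ℕ) (x1 x2 : Fin m → ℝ) (y1 y2 : Fin n → ℝ)
    (h : conv x1 y1 = conv x2 y2) (θ φ : ℝ) :
    conv (Real.cos θ • x1 - Real.sin θ • x2) (Real.sin φ • y1 - Real.cos φ • y2)
      = conv (Real.cos φ • x1 - Real.sin φ • x2) (Real.sin θ • y1 - Real.cos θ • y2) :=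
  (convBilin m n).map_sub_smul_sub_smul_eq_of_eq h _ _ _ _
end
end

section
/- Let m, n ≥ 2, let x ∈ ℝ^m be nonzero with x(m) = 0, and let y ∈ ℝ^n be nonzero with y(1) = 0. Define x' ∈ ℝ^m by x'(1) = 0 and x'(j) = x(j−1) for 2 ≤ j ≤ m, and y' ∈ ℝ^n by y'(j) = y(j+1) for 1 ≤ j ≤ n−1 and y'(n) = 0. Then x' ⋆ y' = x ⋆ y while x' is not a scalar multiple of x; consequently, (x,y) is unidentifiable with respect to linear convolution and K = ℝ^m × ℝ^n. -/
/-!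
Identify a vector `x ∈ ℝ^m` with the polynomial `∑ x(j) X^(j-1)` (`Polynomial.ofFn`); linear
convolution becomes polynomial multiplication. Since `x(m) = 0`, the right shift `x'` is `X · x`,
and since `y(1) = 0`, `y = X · y'`; hence `x' y' = X x y' = x y`. Finally `X · p = α p` is
impossible for `p ≠ 0`, since the left side has the larger degree.
-/

open scoped BigOperators
open MeasureTheory

noncomputable section

open Polynomial

section Shift

variable {m n : ℕ}

def shiftRight (x : Fin m → ℝ) : Fin m → ℝ := fun j =>
  if h : 1 ≤ (j : ℕ) then x ⟨(j : ℕ) - 1, by have := j.isLt; omega⟩ else 0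

def shiftLeft (y : Fin n → ℝ) : Fin n → ℝ := fun j =>
  if h : (j : ℕ) + 1 < n then y ⟨(j : ℕ) + 1, h⟩ else 0

theorem conv_apply_eq_coeff (x : Fin m → ℝ) (y : Fin n → ℝ) (l : Fin (m + n - 1)) :
    conv x y l = (ofFn m x * ofFn n y).coeff l := by
  simp only [conv, ofFn_eq_sum_monomial, Finset.sum_mul_sum, finsetSum_coeff,
    monomial_mul_monomial, coeff_monomial]

theorem ofFn_shiftRight (x : Fin m → ℝ) (hm : 0 < m) (hx : x ⟨m - 1, by omega⟩ = 0) :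
    ofFn m (shiftRight x) = X * ofFn m x := by
  ext (_ | i)
  · simp [shiftRight, hm]
  · rw [coeff_X_mul]
    rcases lt_or_ge (i + 1) m with hi | hi
    · simp [shiftRight, hi, show i < m by omega]
    · rw [ofFn_coeff_eq_zero_of_ge _ hi]
      rcases eq_or_lt_of_le hi with hi | hi
      · rw [ofFn_coeff_eq_val_of_lt _ (by omega)]; convert hx.symm using 3; omega
      · rw [ofFn_coeff_eq_zero_of_ge _ (by omega)]

theorem X_mul_ofFn_shiftLeft (y : Fin n → ℝ) (hn : 0 < n) (hy : y ⟨0, hn⟩ = 0) :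
    X * ofFn n (shiftLeft y) = ofFn n y := by
  ext (_ | i)
  · simp [hn, hy]
  · rw [coeff_X_mul]
    rcases lt_or_ge (i + 1) n with hi | hi
    · simp [shiftLeft, hi, show i < n by omega]
    · rw [ofFn_coeff_eq_zero_of_ge _ hi]
      rcases eq_or_lt_of_le hi with hi | hi
      · rw [ofFn_coeff_eq_val_of_lt _ (by omega)]; simp only [shiftLeft, dite_eq_right_iff]; omega
      · rw [ofFn_coeff_eq_zero_of_ge _ (by omega)]

theorem X_mul_ne_C_mul {R : Type*} [Semiring R] [Nontrivial R] {p : R[X]} (hp : p ≠ 0) (a : R) :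
    X * p ≠ C a * p := by
  intro h
  have := natDegree_C_mul_le a p
  rw [← h, natDegree_X_mul hp] at this
  omega

theorem shiftRight_ne_smul {x : Fin m → ℝ} (hx : x ≠ 0) (hm : 0 < m)
    (hxm : x ⟨m - 1, by omega⟩ = 0) (α : ℝ) : shiftRight x ≠ α • x := by
  intro h
  have hp : ofFn m x ≠ 0 := fun h0 => hx (injective_ofFn m (h0.trans (ofFn_zero m).symm))
  apply X_mul_ne_C_mul hp α
  rw [← ofFn_shiftRight x hm hxm, h, map_smul, smul_eq_C_mul]

theorem conv_shiftRight_shiftLeft (x : Fin m → ℝ) (y : Fin n → ℝ) (hm : 0 < m)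
    (hxm : x ⟨m - 1, by omega⟩ = 0) (hn : 0 < n) (hy : y ⟨0, hn⟩ = 0) :
    conv (shiftRight x) (shiftLeft y) = conv x y := by
  funext l
  rw [conv_apply_eq_coeff, conv_apply_eq_coeff, ofFn_shiftRight x hm hxm, mul_comm X, mul_assoc,
    X_mul_ofFn_shiftLeft y hn hy]

end Shift

/-- if `x ≠ 0` with `x(m) = 0` and `y ≠ 0` with `y(1) = 0`, shifting `x`
right and `y` left keeps the convolution, while `x'` is not a scalar multiple of `x`;
hence `(x,y)` is unidentifiable within `K = ℝ^m × ℝ^n`. -/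
theorem stmt17 (m n : ℕ) (hm : 2 ≤ m) (hn : 2 ≤ n)
    (x : Fin m → ℝ) (hx : x ≠ 0) (hxm : x ⟨m - 1, by omega⟩ = 0)
    (y : Fin n → ℝ) (hy1 : y ⟨0, by omega⟩ = 0) :
    let x' : Fin m → ℝ := fun j =>
      if h : 1 ≤ (j : ℕ) then x ⟨(j : ℕ) - 1, by have := j.isLt; omega⟩ else 0
    let y' : Fin n → ℝ := fun j =>
      if h : (j : ℕ) + 1 < n then y ⟨(j : ℕ) + 1, h⟩ else 0
    conv x' y' = conv x y ∧
    (∀ α : ℝ, x' ≠ α • x) ∧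
    ¬ Identifiable (Set.univ : Set ((Fin m → ℝ) × (Fin n → ℝ))) (x, y) := by
  have hconv : conv (shiftRight x) (shiftLeft y) = conv x y :=
    conv_shiftRight_shiftLeft x y (by omega) hxm (by omega) hy1
  have hnsmul : ∀ α : ℝ, shiftRight x ≠ α • x := shiftRight_ne_smul hx (by omega) hxm
  refine ⟨hconv, hnsmul, fun hid => ?_⟩
  obtain ⟨α, -, hα, -⟩ := hid (shiftRight x, shiftLeft y) (Set.mem_univ _) hconv
  exact hnsmul α hα
end
end
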